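/- arXiv:1606.06470 — 14 statements merged into one kernel-verified Lean document; each statement's English description precedes it below -/
import Mathlib

section
/- Suppose σ, τ, ρ : ℤ³ → ℂ satisfy the bilinear system (S1)–(S3) with constants a_{ij}, b_{ij}, that τ and ρ vanish nowhere on ℤ³, and that b_{ij} ≠ 0 for all i ≠ j. Set Γ₁ = a₂₃b₂₃, Γ₂ = a₃₁b₃₁, Γ₃ = a₁₂b₁₂, and define u : ℤ² → ℂ by u(m) = σ(ν(m))/τ(ν(m)) for m ∈ Λ⁺ and u(m) = −τ(ν(m))/ρ(ν(m)) for m ∈ Λ⁻ (u arbitrary on the remaining points of ℤ²). Then u satisfies the honeycomb field equations with constants Γ₁, Γ₂, Γ₃; in particular, all the differences u(m) − u(m+eᵢ) for m ∈ Λ⁺ and u(m) − u(m−eᵢ) for m ∈ Λ⁻ are nonzero. -/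
/-- The three honeycomb edge vectors in `ℤ²`. -/
def eHL : Fin 3 → ℤ × ℤ := ![(1, 0), (0, 1), (-1, -1)]

/-- `u` satisfies the honeycomb field equations with constants `Γ`. -/
def HoneycombEqs (Γ : Fin 3 → ℂ) (u : ℤ × ℤ → ℂ) : Prop :=
  (∀ m : ℤ × ℤ, (m.1 + m.2) % 3 = 0 →
    (∀ i : Fin 3, u m - u (m + eHL i) ≠ 0) ∧
    ∑ i : Fin 3, Γ i / (u m - u (m + eHL i)) = 0) ∧
  (∀ m : ℤ × ℤ, (m.1 + m.2) % 3 = 1 →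
    (∀ i : Fin 3, u m - u (m - eHL i) ≠ 0) ∧
    ∑ i : Fin 3, Γ i / (u m - u (m - eHL i)) = 0)

/-- The standard basis vectors of `ℤ³`. -/
def δZ (i : Fin 3) : Fin 3 → ℤ := fun j => if j = i then 1 else 0

/-- `N(m) = ⌊(m₁ + m₂ + 2)/3⌋`. -/
def NHL (m : ℤ × ℤ) : ℤ := (m.1 + m.2 + 2) / 3

/-- `ν(m) = (m₁ − N(m), m₂ − N(m), −N(m)) ∈ ℤ³`. -/
def νHL (m : ℤ × ℤ) : Fin 3 → ℤ := ![m.1 - NHL m, m.2 - NHL m, -NHL m]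

theorem stmt0 (σ τ ρ : (Fin 3 → ℤ) → ℂ) (a b : Fin 3 → Fin 3 → ℂ)
    (ha : ∀ i j, a i j = - a j i) (hb : ∀ i j, b i j = b j i)
    (hS1 : ∀ (ν : Fin 3 → ℤ) (i j : Fin 3), i ≠ j →
      σ (ν + δZ i) * τ (ν + δZ j) - τ (ν + δZ i) * σ (ν + δZ j)
        = a i j * τ ν * σ (ν + δZ i + δZ j))
    (hS2 : ∀ (ν : Fin 3 → ℤ) (i j : Fin 3), i ≠ j →
      τ (ν + δZ i) * ρ (ν + δZ j) - ρ (ν + δZ i) * τ (ν + δZ j)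
        = a i j * ρ ν * τ (ν + δZ i + δZ j))
    (hS3 : ∀ (ν : Fin 3 → ℤ) (i j : Fin 3), i ≠ j →
      τ ν * τ (ν + δZ i + δZ j) + ρ ν * σ (ν + δZ i + δZ j)
        = b i j * τ (ν + δZ i) * τ (ν + δZ j))
    (hτ : ∀ ν, τ ν ≠ 0) (hρ : ∀ ν, ρ ν ≠ 0)
    (hbne : ∀ i j : Fin 3, i ≠ j → b i j ≠ 0)
    (Γ : Fin 3 → ℂ) (hΓ : ∀ i : Fin 3, Γ i = a (i + 1) (i + 2) * b (i + 1) (i + 2))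
    (u : ℤ × ℤ → ℂ)
    (hup : ∀ m : ℤ × ℤ, (m.1 + m.2) % 3 = 0 → u m = σ (νHL m) / τ (νHL m))
    (hun : ∀ m : ℤ × ℤ, (m.1 + m.2) % 3 = 1 → u m = - τ (νHL m) / ρ (νHL m)) :
    HoneycombEqs Γ u := by
  constructor
  · -- plus case
    intro m hm
    have hm0 : ((m + eHL 0).1 + (m + eHL 0).2) % 3 = 1 := by
      simp [eHL, Prod.fst_add, Prod.snd_add]; omega
    have hm1 : ((m + eHL 1).1 + (m + eHL 1).2) % 3 = 1 := by
      simp [eHL, Prod.fst_add, Prod.snd_add]; omega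
    have hm2 : ((m + eHL 2).1 + (m + eHL 2).2) % 3 = 1 := by
      simp [eHL, Prod.fst_add, Prod.snd_add]; omega
    set K := NHL m with hK
    set P : Fin 3 → ℤ := ![m.1 - K, m.2 - K, -K] with hPd
    set P0 : Fin 3 → ℤ := ![m.1 - K, m.2 - K - 1, -K - 1] with hP0d
    set P1 : Fin 3 → ℤ := ![m.1 - K - 1, m.2 - K, -K - 1] with hP1d
    set P2 : Fin 3 → ℤ := ![m.1 - K - 1, m.2 - K - 1, -K] with hP2d
    set Q0 : Fin 3 → ℤ := ![m.1 - K - 1, m.2 - K, -K] with hQ0d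
    set Q1 : Fin 3 → ℤ := ![m.1 - K, m.2 - K - 1, -K] with hQ1d
    set Q2 : Fin 3 → ℤ := ![m.1 - K, m.2 - K, -K - 1] with hQ2d
    set M : Fin 3 → ℤ := ![m.1 - K - 1, m.2 - K - 1, -K - 1] with hMd
    have hK' : K = (m.1 + m.2 + 2) / 3 := hK
    have hνm : νHL m = P := by
      funext j; fin_cases j <;> simp [νHL, NHL, hPd] <;> omega
    have hν0 : νHL (m + eHL 0) = P0 := by
      funext j; fin_cases j <;>
        simp [νHL, NHL, eHL, hP0d, Prod.fst_add, Prod.snd_add] <;> omega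
    have hν1 : νHL (m + eHL 1) = P1 := by
      funext j; fin_cases j <;>
        simp [νHL, NHL, eHL, hP1d, Prod.fst_add, Prod.snd_add] <;> omega
    have hν2 : νHL (m + eHL 2) = P2 := by
      funext j; fin_cases j <;>
        simp [νHL, NHL, eHL, hP2d, Prod.fst_add, Prod.snd_add] <;> omega
    have e01 : P0 + δZ 1 = Q2 := by
      funext j; fin_cases j <;> simp [δZ, hP0d, hQ2d, Pi.add_apply, Matrix.vecHead, Matrix.vecTail] <;> omega
    have e02 : P0 + δZ 2 = Q1 := by
      funext j; fin_cases j <;> simp [δZ, hP0d, hQ1d, Pi.add_apply, Matrix.vecHead, Matrix.vecTail] <;> omega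
    have e0P : P0 + δZ 1 + δZ 2 = P := by
      funext j; fin_cases j <;> simp [δZ, hP0d, hPd, Pi.add_apply, Matrix.vecHead, Matrix.vecTail] <;> omega
    have e12 : P1 + δZ 2 = Q0 := by
      funext j; fin_cases j <;> simp [δZ, hP1d, hQ0d, Pi.add_apply, Matrix.vecHead, Matrix.vecTail] <;> omega
    have e10 : P1 + δZ 0 = Q2 := by
      funext j; fin_cases j <;> simp [δZ, hP1d, hQ2d, Pi.add_apply, Matrix.vecHead, Matrix.vecTail] <;> omega
    have e1P : P1 + δZ 2 + δZ 0 = P := by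
      funext j; fin_cases j <;> simp [δZ, hP1d, hPd, Pi.add_apply, Matrix.vecHead, Matrix.vecTail] <;> omega
    have e20 : P2 + δZ 0 = Q1 := by
      funext j; fin_cases j <;> simp [δZ, hP2d, hQ1d, Pi.add_apply, Matrix.vecHead, Matrix.vecTail] <;> omega
    have e21 : P2 + δZ 1 = Q0 := by
      funext j; fin_cases j <;> simp [δZ, hP2d, hQ0d, Pi.add_apply, Matrix.vecHead, Matrix.vecTail] <;> omega
    have e2P : P2 + δZ 0 + δZ 1 = P := by
      funext j; fin_cases j <;> simp [δZ, hP2d, hPd, Pi.add_apply, Matrix.vecHead, Matrix.vecTail] <;> omega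
    have f1 : M + δZ 1 = P1 := by
      funext j; fin_cases j <;> simp [δZ, hMd, hP1d, Pi.add_apply, Matrix.vecHead, Matrix.vecTail] <;> omega
    have f2 : M + δZ 2 = P2 := by
      funext j; fin_cases j <;> simp [δZ, hMd, hP2d, Pi.add_apply, Matrix.vecHead, Matrix.vecTail] <;> omega
    have f0 : M + δZ 0 = P0 := by
      funext j; fin_cases j <;> simp [δZ, hMd, hP0d, Pi.add_apply, Matrix.vecHead, Matrix.vecTail] <;> omega
    have f12 : M + δZ 1 + δZ 2 = Q0 := by
      funext j; fin_cases j <;> simp [δZ, hMd, hQ0d, Pi.add_apply, Matrix.vecHead, Matrix.vecTail] <;> omega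
    have f20 : M + δZ 2 + δZ 0 = Q1 := by
      funext j; fin_cases j <;> simp [δZ, hMd, hQ1d, Pi.add_apply, Matrix.vecHead, Matrix.vecTail] <;> omega
    have f01 : M + δZ 0 + δZ 1 = Q2 := by
      funext j; fin_cases j <;> simp [δZ, hMd, hQ2d, Pi.add_apply, Matrix.vecHead, Matrix.vecTail] <;> omega
    have h30 := hS3 P0 1 2 (by decide)
    rw [e0P, e01, e02] at h30
    have h31 := hS3 P1 2 0 (by decide)
    rw [e1P, e12, e10] at h31
    have h32 := hS3 P2 0 1 (by decide)
    rw [e2P, e20, e21] at h32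
    have h21 := hS2 M 1 2 (by decide)
    rw [f12, f1, f2] at h21
    have h22 := hS2 M 2 0 (by decide)
    rw [f20, f2, f0] at h22
    have h20 := hS2 M 0 1 (by decide)
    rw [f01, f0, f1] at h20
    have hτP := hτ P
    have hτQ0 := hτ Q0
    have hτQ1 := hτ Q1
    have hτQ2 := hτ Q2
    have hρ0 := hρ P0
    have hρ1 := hρ P1
    have hρ2 := hρ P2
    have hρM := hρ M
    have hb12 := hbne 1 2 (by decide)
    have hb20 := hbne 2 0 (by decide)
    have hb01 := hbne 0 1 (by decide)
    have hd0 : u m - u (m + eHL 0) = b 1 2 * τ Q2 * τ Q1 / (τ P * ρ P0) := by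
      rw [hup m hm, hun _ hm0, hνm, hν0]
      field_simp
      linear_combination h30
    have hd1 : u m - u (m + eHL 1) = b 2 0 * τ Q0 * τ Q2 / (τ P * ρ P1) := by
      rw [hup m hm, hun _ hm1, hνm, hν1]
      field_simp
      linear_combination h31
    have hd2 : u m - u (m + eHL 2) = b 0 1 * τ Q1 * τ Q0 / (τ P * ρ P2) := by
      rw [hup m hm, hun _ hm2, hνm, hν2]
      field_simp
      linear_combination h32
    have hΓ0 : Γ 0 = a 1 2 * b 1 2 := hΓ 0
    have hΓ1 : Γ 1 = a 2 0 * b 2 0 := hΓ 1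
    have hΓ2 : Γ 2 = a 0 1 * b 0 1 := hΓ 2
    have hne0 : u m - u (m + eHL 0) ≠ 0 := by
      rw [hd0]
      exact div_ne_zero (mul_ne_zero (mul_ne_zero hb12 hτQ2) hτQ1) (mul_ne_zero hτP hρ0)
    have hne1 : u m - u (m + eHL 1) ≠ 0 := by
      rw [hd1]
      exact div_ne_zero (mul_ne_zero (mul_ne_zero hb20 hτQ0) hτQ2) (mul_ne_zero hτP hρ1)
    have hne2 : u m - u (m + eHL 2) ≠ 0 := by
      rw [hd2]
      exact div_ne_zero (mul_ne_zero (mul_ne_zero hb01 hτQ1) hτQ0) (mul_ne_zero hτP hρ2)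
    constructor
    · intro i
      fin_cases i
      · exact hne0
      · exact hne1
      · exact hne2
    · have key0 : ρ M * (a 1 2 * ρ P0 * τ Q0 + a 2 0 * ρ P1 * τ Q1 + a 0 1 * ρ P2 * τ Q2) = 0 := by
        linear_combination -(ρ P0 * h21) - ρ P1 * h22 - ρ P2 * h20
      have key := (mul_eq_zero.mp key0).resolve_left hρM
      rw [Fin.sum_univ_three, hd0, hd1, hd2, hΓ0, hΓ1, hΓ2]
      have hstep : a 1 2 * b 1 2 / (b 1 2 * τ Q2 * τ Q1 / (τ P * ρ P0))
          + a 2 0 * b 2 0 / (b 2 0 * τ Q0 * τ Q2 / (τ P * ρ P1))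
          + a 0 1 * b 0 1 / (b 0 1 * τ Q1 * τ Q0 / (τ P * ρ P2))
          = τ P / (τ Q0 * τ Q1 * τ Q2) *
            (a 1 2 * ρ P0 * τ Q0 + a 2 0 * ρ P1 * τ Q1 + a 0 1 * ρ P2 * τ Q2) := by
        have d0 : b 1 2 * τ Q2 * τ Q1 ≠ 0 := mul_ne_zero (mul_ne_zero hb12 hτQ2) hτQ1
        have d1 : b 2 0 * τ Q0 * τ Q2 ≠ 0 := mul_ne_zero (mul_ne_zero hb20 hτQ0) hτQ2
        have d2 : b 0 1 * τ Q1 * τ Q0 ≠ 0 := mul_ne_zero (mul_ne_zero hb01 hτQ1) hτQ0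
        rw [div_div_eq_mul_div, div_div_eq_mul_div, div_div_eq_mul_div,
          div_add_div _ _ d0 d1, div_add_div _ _ (mul_ne_zero d0 d1) d2,
          div_mul_eq_mul_div,
          div_eq_div_iff (mul_ne_zero (mul_ne_zero d0 d1) d2)
            (mul_ne_zero (mul_ne_zero hτQ0 hτQ1) hτQ2)]
        ring
      rw [hstep, key, mul_zero]
  · -- minus case
    intro m hm
    have hm0 : ((m - eHL 0).1 + (m - eHL 0).2) % 3 = 0 := by
      simp [eHL, Prod.fst_sub, Prod.snd_sub]; omega
    have hm1 : ((m - eHL 1).1 + (m - eHL 1).2) % 3 = 0 := by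
      simp [eHL, Prod.fst_sub, Prod.snd_sub]; omega
    have hm2 : ((m - eHL 2).1 + (m - eHL 2).2) % 3 = 0 := by
      simp [eHL, Prod.fst_sub, Prod.snd_sub]; omega
    set K := NHL m with hK
    set P : Fin 3 → ℤ := ![m.1 - K, m.2 - K, -K] with hPd
    set R0 : Fin 3 → ℤ := ![m.1 - K, m.2 - K + 1, -K + 1] with hR0d
    set R1 : Fin 3 → ℤ := ![m.1 - K + 1, m.2 - K, -K + 1] with hR1d
    set R2 : Fin 3 → ℤ := ![m.1 - K + 1, m.2 - K + 1, -K] with hR2d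
    set T0 : Fin 3 → ℤ := ![m.1 - K + 1, m.2 - K, -K] with hT0d
    set T1 : Fin 3 → ℤ := ![m.1 - K, m.2 - K + 1, -K] with hT1d
    set T2 : Fin 3 → ℤ := ![m.1 - K, m.2 - K, -K + 1] with hT2d
    have hK' : K = (m.1 + m.2 + 2) / 3 := hK
    have hνm : νHL m = P := by
      funext j; fin_cases j <;> simp [νHL, NHL, hPd] <;> omega
    have hν0 : νHL (m - eHL 0) = R0 := by
      funext j; fin_cases j <;>
        simp [νHL, NHL, eHL, hR0d, Prod.fst_sub, Prod.snd_sub] <;> omega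
    have hν1 : νHL (m - eHL 1) = R1 := by
      funext j; fin_cases j <;>
        simp [νHL, NHL, eHL, hR1d, Prod.fst_sub, Prod.snd_sub] <;> omega
    have hν2 : νHL (m - eHL 2) = R2 := by
      funext j; fin_cases j <;>
        simp [νHL, NHL, eHL, hR2d, Prod.fst_sub, Prod.snd_sub] <;> omega
    have g0 : P + δZ 0 = T0 := by
      funext j; fin_cases j <;> simp [δZ, hPd, hT0d, Pi.add_apply, Matrix.vecHead, Matrix.vecTail] <;> omega
    have g1 : P + δZ 1 = T1 := by
      funext j; fin_cases j <;> simp [δZ, hPd, hT1d, Pi.add_apply, Matrix.vecHead, Matrix.vecTail] <;> omega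
    have g2 : P + δZ 2 = T2 := by
      funext j; fin_cases j <;> simp [δZ, hPd, hT2d, Pi.add_apply, Matrix.vecHead, Matrix.vecTail] <;> omega
    have g12 : P + δZ 1 + δZ 2 = R0 := by
      funext j; fin_cases j <;> simp [δZ, hPd, hR0d, Pi.add_apply, Matrix.vecHead, Matrix.vecTail] <;> omega
    have g20 : P + δZ 2 + δZ 0 = R1 := by
      funext j; fin_cases j <;> simp [δZ, hPd, hR1d, Pi.add_apply, Matrix.vecHead, Matrix.vecTail] <;> omega
    have g01 : P + δZ 0 + δZ 1 = R2 := by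
      funext j; fin_cases j <;> simp [δZ, hPd, hR2d, Pi.add_apply, Matrix.vecHead, Matrix.vecTail] <;> omega
    have h30 := hS3 P 1 2 (by decide)
    rw [g12, g1, g2] at h30
    have h31 := hS3 P 2 0 (by decide)
    rw [g20, g2, g0] at h31
    have h32 := hS3 P 0 1 (by decide)
    rw [g01, g0, g1] at h32
    have h21 := hS2 P 1 2 (by decide)
    rw [g12, g1, g2] at h21
    have h22 := hS2 P 2 0 (by decide)
    rw [g20, g2, g0] at h22
    have h20 := hS2 P 0 1 (by decide)
    rw [g01, g0, g1] at h20
    have hρP := hρ P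
    have hτT0 := hτ T0
    have hτT1 := hτ T1
    have hτT2 := hτ T2
    have hτR0 := hτ R0
    have hτR1 := hτ R1
    have hτR2 := hτ R2
    have hb12 := hbne 1 2 (by decide)
    have hb20 := hbne 2 0 (by decide)
    have hb01 := hbne 0 1 (by decide)
    have hd0 : u m - u (m - eHL 0) = -(b 1 2 * τ T1 * τ T2) / (ρ P * τ R0) := by
      rw [hun m hm, hup _ hm0, hνm, hν0]
      field_simp
      linear_combination -h30
    have hd1 : u m - u (m - eHL 1) = -(b 2 0 * τ T2 * τ T0) / (ρ P * τ R1) := by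
      rw [hun m hm, hup _ hm1, hνm, hν1]
      field_simp
      linear_combination -h31
    have hd2 : u m - u (m - eHL 2) = -(b 0 1 * τ T0 * τ T1) / (ρ P * τ R2) := by
      rw [hun m hm, hup _ hm2, hνm, hν2]
      field_simp
      linear_combination -h32
    have hΓ0 : Γ 0 = a 1 2 * b 1 2 := hΓ 0
    have hΓ1 : Γ 1 = a 2 0 * b 2 0 := hΓ 1
    have hΓ2 : Γ 2 = a 0 1 * b 0 1 := hΓ 2
    have hne0 : u m - u (m - eHL 0) ≠ 0 := by
      rw [hd0]
      exact div_ne_zero (neg_ne_zero.mpr (mul_ne_zero (mul_ne_zero hb12 hτT1) hτT2))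
        (mul_ne_zero hρP hτR0)
    have hne1 : u m - u (m - eHL 1) ≠ 0 := by
      rw [hd1]
      exact div_ne_zero (neg_ne_zero.mpr (mul_ne_zero (mul_ne_zero hb20 hτT2) hτT0))
        (mul_ne_zero hρP hτR1)
    have hne2 : u m - u (m - eHL 2) ≠ 0 := by
      rw [hd2]
      exact div_ne_zero (neg_ne_zero.mpr (mul_ne_zero (mul_ne_zero hb01 hτT0) hτT1))
        (mul_ne_zero hρP hτR2)
    constructor
    · intro i
      fin_cases i
      · exact hne0
      · exact hne1
      · exact hne2
    · have key : a 1 2 * ρ P * τ R0 * τ T0 + a 2 0 * ρ P * τ R1 * τ T1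
          + a 0 1 * ρ P * τ R2 * τ T2 = 0 := by
        linear_combination -(τ T0 * h21) - τ T1 * h22 - τ T2 * h20
      rw [Fin.sum_univ_three, hd0, hd1, hd2, hΓ0, hΓ1, hΓ2]
      have hstep : a 1 2 * b 1 2 / (-(b 1 2 * τ T1 * τ T2) / (ρ P * τ R0))
          + a 2 0 * b 2 0 / (-(b 2 0 * τ T2 * τ T0) / (ρ P * τ R1))
          + a 0 1 * b 0 1 / (-(b 0 1 * τ T0 * τ T1) / (ρ P * τ R2))
          = 1 / (τ T0 * τ T1 * τ T2) *
            -(a 1 2 * ρ P * τ R0 * τ T0 + a 2 0 * ρ P * τ R1 * τ T1 + a 0 1 * ρ P * τ R2 * τ T2) := by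
        have d0 : -(b 1 2 * τ T1 * τ T2) ≠ 0 :=
          neg_ne_zero.mpr (mul_ne_zero (mul_ne_zero hb12 hτT1) hτT2)
        have d1 : -(b 2 0 * τ T2 * τ T0) ≠ 0 :=
          neg_ne_zero.mpr (mul_ne_zero (mul_ne_zero hb20 hτT2) hτT0)
        have d2 : -(b 0 1 * τ T0 * τ T1) ≠ 0 :=
          neg_ne_zero.mpr (mul_ne_zero (mul_ne_zero hb01 hτT0) hτT1)
        rw [div_div_eq_mul_div, div_div_eq_mul_div, div_div_eq_mul_div,
          div_add_div _ _ d0 d1, div_add_div _ _ (mul_ne_zero d0 d1) d2,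
          div_mul_eq_mul_div,
          div_eq_div_iff (mul_ne_zero (mul_ne_zero d0 d1) d2)
            (mul_ne_zero (mul_ne_zero hτT0 hτT1) hτT2)]
        ring
      rw [hstep, key, neg_zero, mul_zero]
end

section
/- Suppose σ, τ, ρ : ℤ³ → ℂ satisfy the bilinear system (S1)–(S3) with constants a_{ij}, b_{ij}, that σ, τ and ρ vanish nowhere on ℤ³, and that a_{ij} ≠ 0 for all i ≠ j. Set Γ₁ = a₂₃b₂₃, Γ₂ = a₃₁b₃₁, Γ₃ = a₁₂b₁₂, define u(m) = σ(ν(m))/τ(ν(m)) for m ∈ Λ⁺, and set G₁=(1,2), G₂=(−2,−1), G₃=(1,−1) in ℤ² (the vectors Gᵢ = e_{i+1} − e_{i−1}). Then for every m ∈ Λ⁺ all six differences u(m) − u(m ± Gᵢ) (i=1,2,3) are nonzero and ∑_{i=1}^{3} Γᵢ·[1/(u(m)−u(m+Gᵢ)) + 1/(u(m)−u(m−Gᵢ))] = 0, i.e. u solves the triangular-lattice field equations on the sublattice Λ⁺. -/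
/-- The triangular-lattice vectors `Gᵢ = e_{i+1} − e_{i−1}` in `ℤ²`. -/
def GTL : Fin 3 → ℤ × ℤ := ![(1, 2), (-2, -1), (1, -1)]

/-!
Write `w = σ / τ`. Equation (S1) at `ν - e t` expresses the difference of `w` along the lattice
edge `e s - e t` as a product of nowhere vanishing factors, and (S3) then turns
`a s t * b s t / (w ν - w (ν + e s - e t))` into `-(τ/σ (ν + e s) + ρ/τ (ν - e t))`. Pairing the
edges `±(e s - e t)` with the antisymmetry of `a` and the symmetry of `b` gives
`g t - g s` for `g k = τ/σ (ν + e k) - ρ/τ (ν - e k)`, and the sum of these over the three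
directions of the triangular lattice telescopes to `0`. On `Λ⁺` the map `ν` sends the
neighbours `m ± Gᵢ` to `ν(m) ± (δ_{i+1} - δ_{i+2})`.
-/

section BilinearSystem

variable {ι V K : Type*} [AddCommGroup V] [Field K]
  {σ τ ρ : V → K} {e : ι → V} {a b : ι → ι → K}

theorem div_sub_div_edge_eq
    (hS1 : ∀ ν i j, i ≠ j →
      σ (ν + e i) * τ (ν + e j) - τ (ν + e i) * σ (ν + e j) = a i j * τ ν * σ (ν + e i + e j))
    (hτ : ∀ ν, τ ν ≠ 0) (ν : V) {s t : ι} (hst : s ≠ t) :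
    (σ / τ) ν - (σ / τ) (ν + e s - e t)
      = a t s * τ (ν - e t) * σ (ν + e s) / (τ ν * τ (ν + e s - e t)) := by
  have h := hS1 (ν - e t) t s hst.symm
  rw [sub_add_cancel, sub_add_eq_add_sub] at h
  rw [Pi.div_apply, Pi.div_apply, div_sub_div _ _ (hτ _) (hτ _), h]

theorem div_sub_div_edge_ne_zero
    (hS1 : ∀ ν i j, i ≠ j →
      σ (ν + e i) * τ (ν + e j) - τ (ν + e i) * σ (ν + e j) = a i j * τ ν * σ (ν + e i + e j))
    (hσ : ∀ ν, σ ν ≠ 0) (hτ : ∀ ν, τ ν ≠ 0) (hane : ∀ i j, i ≠ j → a i j ≠ 0)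
    (ν : V) {s t : ι} (hst : s ≠ t) :
    (σ / τ) ν - (σ / τ) (ν + e s - e t) ≠ 0 := by
  rw [div_sub_div_edge_eq hS1 hτ ν hst]
  exact div_ne_zero (mul_ne_zero (mul_ne_zero (hane t s hst.symm) (hτ _)) (hσ _))
    (mul_ne_zero (hτ _) (hτ _))

theorem mul_inv_div_sub_div_edge
    (ha : ∀ i j, a i j = -a j i)
    (hS1 : ∀ ν i j, i ≠ j →
      σ (ν + e i) * τ (ν + e j) - τ (ν + e i) * σ (ν + e j) = a i j * τ ν * σ (ν + e i + e j))
    (hS3 : ∀ ν i j, i ≠ j →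
      τ ν * τ (ν + e i + e j) + ρ ν * σ (ν + e i + e j) = b i j * τ (ν + e i) * τ (ν + e j))
    (hσ : ∀ ν, σ ν ≠ 0) (hτ : ∀ ν, τ ν ≠ 0) (hane : ∀ i j, i ≠ j → a i j ≠ 0)
    (ν : V) {s t : ι} (hst : s ≠ t) :
    a s t * b s t * ((σ / τ) ν - (σ / τ) (ν + e s - e t))⁻¹
      = -((τ / σ) (ν + e s) + (ρ / τ) (ν - e t)) := by
  have h := hS3 (ν - e t) s t hst
  rw [add_right_comm, sub_add_cancel, sub_add_eq_add_sub] at h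
  rw [div_sub_div_edge_eq hS1 hτ ν hst, ha s t, inv_div, Pi.div_apply, Pi.div_apply]
  have := hane t s hst.symm; have := hτ (ν - e t); have := hσ (ν + e s); have := hτ ν; have := hτ (ν + e s - e t)
  field_simp
  linear_combination h

theorem mul_inv_add_inv_div_sub_div_edge
    (ha : ∀ i j, a i j = -a j i) (hb : ∀ i j, b i j = b j i)
    (hS1 : ∀ ν i j, i ≠ j →
      σ (ν + e i) * τ (ν + e j) - τ (ν + e i) * σ (ν + e j) = a i j * τ ν * σ (ν + e i + e j))
    (hS3 : ∀ ν i j, i ≠ j →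
      τ ν * τ (ν + e i + e j) + ρ ν * σ (ν + e i + e j) = b i j * τ (ν + e i) * τ (ν + e j))
    (hσ : ∀ ν, σ ν ≠ 0) (hτ : ∀ ν, τ ν ≠ 0) (hane : ∀ i j, i ≠ j → a i j ≠ 0)
    (ν : V) {s t : ι} (hst : s ≠ t) :
    a s t * b s t * (((σ / τ) ν - (σ / τ) (ν + e s - e t))⁻¹
        + ((σ / τ) ν - (σ / τ) (ν + e t - e s))⁻¹)
      = ((τ / σ) (ν + e t) - (ρ / τ) (ν - e t)) - ((τ / σ) (ν + e s) - (ρ / τ) (ν - e s)) := by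
  have hs := mul_inv_div_sub_div_edge ha hS1 hS3 hσ hτ hane ν hst
  have ht := mul_inv_div_sub_div_edge ha hS1 hS3 hσ hτ hane ν hst.symm
  rw [ha t s, hb t s] at ht
  linear_combination hs - ht

end BilinearSystem

section HoneycombCoordinates

variable {m : ℤ × ℤ}

theorem add_GTL_mod_three (hm : (m.1 + m.2) % 3 = 0) (i : Fin 3) :
    ((m + GTL i).1 + (m + GTL i).2) % 3 = 0 := by
  fin_cases i <;> simp [GTL] <;> omega

theorem sub_GTL_mod_three (hm : (m.1 + m.2) % 3 = 0) (i : Fin 3) :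
    ((m - GTL i).1 + (m - GTL i).2) % 3 = 0 := by
  fin_cases i <;> simp [GTL] <;> omega

theorem νHL_add_GTL (hm : (m.1 + m.2) % 3 = 0) (i : Fin 3) :
    νHL (m + GTL i) = νHL m + δZ (i + 1) - δZ (i + 2) := by
  funext j
  fin_cases i <;> fin_cases j <;>
    simp only [Pi.add_apply, Pi.sub_apply, νHL, NHL, δZ, GTL, Prod.fst_add, Prod.snd_add] <;>
    simp <;> omega

theorem νHL_sub_GTL (hm : (m.1 + m.2) % 3 = 0) (i : Fin 3) :
    νHL (m - GTL i) = νHL m + δZ (i + 2) - δZ (i + 1) := by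
  funext j
  fin_cases i <;> fin_cases j <;>
    simp only [Pi.add_apply, Pi.sub_apply, νHL, NHL, δZ, GTL, Prod.fst_sub, Prod.snd_sub] <;>
    simp <;> omega

end HoneycombCoordinates

theorem Fin.add_one_ne_add_two (i : Fin 3) : i + 1 ≠ i + 2 :=
  (add_right_injective i).ne (by decide)

theorem stmt1_general (σ τ ρ : (Fin 3 → ℤ) → ℂ) (a b : Fin 3 → Fin 3 → ℂ)
    (ha : ∀ i j, a i j = - a j i) (hb : ∀ i j, b i j = b j i)
    (hS1 : ∀ (ν : Fin 3 → ℤ) (i j : Fin 3), i ≠ j →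
      σ (ν + δZ i) * τ (ν + δZ j) - τ (ν + δZ i) * σ (ν + δZ j)
        = a i j * τ ν * σ (ν + δZ i + δZ j))
    (hS3 : ∀ (ν : Fin 3 → ℤ) (i j : Fin 3), i ≠ j →
      τ ν * τ (ν + δZ i + δZ j) + ρ ν * σ (ν + δZ i + δZ j)
        = b i j * τ (ν + δZ i) * τ (ν + δZ j))
    (hσ : ∀ ν, σ ν ≠ 0) (hτ : ∀ ν, τ ν ≠ 0)
    (hane : ∀ i j : Fin 3, i ≠ j → a i j ≠ 0)
    (Γ : Fin 3 → ℂ) (hΓ : ∀ i : Fin 3, Γ i = a (i + 1) (i + 2) * b (i + 1) (i + 2))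
    (u : ℤ × ℤ → ℂ)
    (hup : ∀ m : ℤ × ℤ, (m.1 + m.2) % 3 = 0 → u m = σ (νHL m) / τ (νHL m)) :
    ∀ m : ℤ × ℤ, (m.1 + m.2) % 3 = 0 →
      (∀ i : Fin 3, u m - u (m + GTL i) ≠ 0 ∧ u m - u (m - GTL i) ≠ 0) ∧
      ∑ i : Fin 3,
        Γ i * (1 / (u m - u (m + GTL i)) + 1 / (u m - u (m - GTL i))) = 0 := by
  intro m hm
  have hu : ∀ n : ℤ × ℤ, (n.1 + n.2) % 3 = 0 → u n = (σ / τ) (νHL n) := hup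
  have hu_add (i : Fin 3) : u (m + GTL i) = (σ / τ) (νHL m + δZ (i + 1) - δZ (i + 2)) := by
    rw [hu _ (add_GTL_mod_three hm i), νHL_add_GTL hm i]
  have hu_sub (i : Fin 3) : u (m - GTL i) = (σ / τ) (νHL m + δZ (i + 2) - δZ (i + 1)) := by
    rw [hu _ (sub_GTL_mod_three hm i), νHL_sub_GTL hm i]
  simp only [hu m hm, hu_add, hu_sub, one_div, hΓ]
  refine ⟨fun i => ⟨div_sub_div_edge_ne_zero hS1 hσ hτ hane _ i.add_one_ne_add_two,
    div_sub_div_edge_ne_zero hS1 hσ hτ hane _ i.add_one_ne_add_two.symm⟩, ?_⟩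
  set g : Fin 3 → ℂ := fun k => (τ / σ) (νHL m + δZ k) - (ρ / τ) (νHL m - δZ k)
  calc _ = ∑ i : Fin 3, (g (i + 2) - g (i + 1)) :=
        Finset.sum_congr rfl fun i _ =>
          mul_inv_add_inv_div_sub_div_edge ha hb hS1 hS3 hσ hτ hane _ i.add_one_ne_add_two
    _ = 0 := by
        rw [Finset.sum_sub_distrib,
          Fintype.sum_equiv (Equiv.addRight 2) (fun i => g (i + 2)) g fun _ => rfl,
          Fintype.sum_equiv (Equiv.addRight 1) (fun i => g (i + 1)) g fun _ => rfl, sub_self]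

theorem stmt1 (σ τ ρ : (Fin 3 → ℤ) → ℂ) (a b : Fin 3 → Fin 3 → ℂ)
    (ha : ∀ i j, a i j = - a j i) (hb : ∀ i j, b i j = b j i)
    (hS1 : ∀ (ν : Fin 3 → ℤ) (i j : Fin 3), i ≠ j →
      σ (ν + δZ i) * τ (ν + δZ j) - τ (ν + δZ i) * σ (ν + δZ j)
        = a i j * τ ν * σ (ν + δZ i + δZ j))
    (hS2 : ∀ (ν : Fin 3 → ℤ) (i j : Fin 3), i ≠ j →
      τ (ν + δZ i) * ρ (ν + δZ j) - ρ (ν + δZ i) * τ (ν + δZ j)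
        = a i j * ρ ν * τ (ν + δZ i + δZ j))
    (hS3 : ∀ (ν : Fin 3 → ℤ) (i j : Fin 3), i ≠ j →
      τ ν * τ (ν + δZ i + δZ j) + ρ ν * σ (ν + δZ i + δZ j)
        = b i j * τ (ν + δZ i) * τ (ν + δZ j))
    (hσ : ∀ ν, σ ν ≠ 0) (hτ : ∀ ν, τ ν ≠ 0) (hρ : ∀ ν, ρ ν ≠ 0)
    (hane : ∀ i j : Fin 3, i ≠ j → a i j ≠ 0)
    (Γ : Fin 3 → ℂ) (hΓ : ∀ i : Fin 3, Γ i = a (i + 1) (i + 2) * b (i + 1) (i + 2))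
    (u : ℤ × ℤ → ℂ)
    (hup : ∀ m : ℤ × ℤ, (m.1 + m.2) % 3 = 0 → u m = σ (νHL m) / τ (νHL m)) :
    ∀ m : ℤ × ℤ, (m.1 + m.2) % 3 = 0 →
      (∀ i : Fin 3, u m - u (m + GTL i) ≠ 0 ∧ u m - u (m - GTL i) ≠ 0) ∧
      ∑ i : Fin 3,
        Γ i * (1 / (u m - u (m + GTL i)) + 1 / (u m - u (m - GTL i))) = 0 :=
  stmt1_general σ τ ρ a b ha hb hS1 hS3 hσ hτ hane Γ hΓ u hup
end

section
/- Let Γ₁, Γ₂, Γ₃ ∈ ℂ with Γ₁ + Γ₂ + Γ₃ = 0 and let v, u₁, u₂, u₃ ∈ ℂ be such that v ≠ uᵢ for i = 1, 2, 3 and ∑_{i=1}^{3} Γᵢ/(v − uᵢ) = 0. If ∑_{i=1}^{3} Γᵢ·uᵢ ≠ 0, then v = −(∑_{i=1}^{3} Γᵢ·u_{i−1}·u_{i+1})/(∑_{i=1}^{3} Γᵢ·uᵢ), where the subscripts of u are taken modulo 3 (u₀ = u₃, u₄ = u₁). -/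
/-! Clearing denominators turns the field equation into
`∑ Γᵢ (v - uᵢ₋₁)(v - uᵢ₊₁) = 0`, a quadratic in `v` whose leading coefficient is `∑ Γᵢ = 0`.
Since `∑ Γᵢ (uᵢ₋₁ + uᵢ₊₁) = (∑ uⱼ)(∑ Γᵢ) - ∑ Γᵢ uᵢ`, what remains is the linear equation
`v ∑ Γᵢ uᵢ + ∑ Γᵢ uᵢ₋₁ uᵢ₊₁ = 0`. -/

namespace Fin

theorem sum_univ_three_cyclic {M : Type*} [AddCommMonoid M] (f : Fin 3 → Fin 3 → Fin 3 → M) :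
    ∑ i : Fin 3, f (i - 1) i (i + 1) = f 2 0 1 + f 0 1 2 + f 1 2 0 :=
  Fin.sum_univ_three _

end Fin

theorem sum_mul_sub_pred_mul_sub_succ {R : Type*} [CommRing R] (Γ u : Fin 3 → R) (v : R) :
    ∑ i : Fin 3, Γ i * (v - u (i - 1)) * (v - u (i + 1)) =
      (v ^ 2 - v * ∑ j, u j) * ∑ i, Γ i + v * ∑ i, Γ i * u i +
        ∑ i : Fin 3, Γ i * u (i - 1) * u (i + 1) := by
  simp only [Fin.sum_univ_three_cyclic (fun a b c => Γ b * (v - u a) * (v - u c)),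
    Fin.sum_univ_three_cyclic (fun a b c => Γ b * u a * u c), Fin.sum_univ_three]
  ring

theorem sum_mul_sub_pred_mul_sub_succ_eq_zero {K : Type*} [Field K] {Γ u : Fin 3 → K} {v : K}
    (hne : ∀ i, v ≠ u i) (heq : ∑ i : Fin 3, Γ i / (v - u i) = 0) :
    ∑ i : Fin 3, Γ i * (v - u (i - 1)) * (v - u (i + 1)) = 0 := by
  have h0 := sub_ne_zero_of_ne (hne 0)
  have h1 := sub_ne_zero_of_ne (hne 1)
  have h2 := sub_ne_zero_of_ne (hne 2)
  rw [Fin.sum_univ_three] at heq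
  field_simp at heq
  rw [Fin.sum_univ_three_cyclic (fun a b c => Γ b * (v - u a) * (v - u c))]
  linear_combination heq

theorem stmt4 (Γ u : Fin 3 → ℂ) (v : ℂ)
    (hΓ : Γ 0 + Γ 1 + Γ 2 = 0)
    (hne : ∀ i : Fin 3, v ≠ u i)
    (heq : ∑ i : Fin 3, Γ i / (v - u i) = 0)
    (hden : ∑ i : Fin 3, Γ i * u i ≠ 0) :
    v = - (∑ i : Fin 3, Γ i * u (i - 1) * u (i + 1)) / (∑ i : Fin 3, Γ i * u i) := by
  have hcleared := sum_mul_sub_pred_mul_sub_succ_eq_zero hne heq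
  rw [sum_mul_sub_pred_mul_sub_succ, Fin.sum_univ_three Γ, hΓ, mul_zero, zero_add] at hcleared
  rw [eq_div_iff hden]
  linear_combination hcleared
end

section
/- Let Γ₁, Γ₂, Γ₃ ∈ ℂ with Γ₁ + Γ₂ + Γ₃ = 0 and let u : ℤ² → ℂ satisfy the honeycomb field equations with these constants. Set G₁ = (1,2), G₂ = (−2,−1), G₃ = (1,−1) in ℤ² (the vectors Gᵢ = e_{i+1} − e_{i−1}), and assume additionally that u(m) ≠ u(m + Gᵢ) and u(m) ≠ u(m − Gᵢ) for every m ∈ Λ⁺ and i = 1, 2, 3. Then for every m ∈ Λ⁺: ∑_{i=1}^{3} Γᵢ·[1/(u(m)−u(m+Gᵢ)) + 1/(u(m)−u(m−Gᵢ))] = 0; that is, u restricted to the sublattice Λ⁺ solves the triangular-lattice field equations. -/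
lemma key_vortex (g0 g1 g2 a b cp cm : ℂ) (hs : g0 + g1 + g2 = 0)
    (h : g0 / (b - a) + g1 / (b - cp) + g2 / (b - cm) = 0)
    (h1 : a - b ≠ 0) (h2 : b - cp ≠ 0) (h3 : b - cm ≠ 0)
    (h4 : a - cp ≠ 0) (h5 : a - cm ≠ 0) :
    g2 / (a - cp) + g1 / (a - cm) + g0 / (a - b) = 0 := by
  have h1' : b - a ≠ 0 := fun hh => h1 (by linear_combination -hh)
  field_simp at h ⊢
  linear_combination h + (a-b)*(a+b-cp-cm)*hs

set_option maxHeartbeats 1000000 in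
theorem stmt5 (Γ : Fin 3 → ℂ) (hΓ : Γ 0 + Γ 1 + Γ 2 = 0)
    (u : ℤ × ℤ → ℂ) (hu : HoneycombEqs Γ u)
    (hne : ∀ m : ℤ × ℤ, (m.1 + m.2) % 3 = 0 → ∀ i : Fin 3,
      u m ≠ u (m + GTL i) ∧ u m ≠ u (m - GTL i)) :
    ∀ m : ℤ × ℤ, (m.1 + m.2) % 3 = 0 →
      ∑ i : Fin 3,
        Γ i * (1 / (u m - u (m + GTL i)) + 1 / (u m - u (m - GTL i))) = 0 := by
  obtain ⟨hp, hm⟩ := hu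
  rintro ⟨x, y⟩ hxy
  simp only at hxy
  obtain ⟨hcne, hceq⟩ := hp (x, y) hxy
  have hcne0 := hcne 0
  have hcne1 := hcne 1
  have hcne2 := hcne 2
  obtain ⟨hn0ne, hn0⟩ := hm ((x, y) + (1, 0)) (by simp; omega)
  obtain ⟨hn1ne, hn1⟩ := hm ((x, y) + (0, 1)) (by simp; omega)
  obtain ⟨hn2ne, hn2⟩ := hm ((x, y) + (-1, -1)) (by simp; omega)
  have hn0ne1 := hn0ne 1
  have hn0ne2 := hn0ne 2
  have hn1ne0 := hn1ne 0
  have hn1ne2 := hn1ne 2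
  have hn2ne0 := hn2ne 0
  have hn2ne1 := hn2ne 1
  have H0 := hne (x, y) hxy 0
  have H1 := hne (x, y) hxy 1
  have H2 := hne (x, y) hxy 2
  clear hcne hn0ne hn1ne hn2ne hp hm hne hxy
  simp only [Fin.sum_univ_three, eHL, GTL, Matrix.cons_val_zero, Matrix.cons_val_one,
    Matrix.head_cons, Matrix.cons_val_two, Matrix.tail_cons, Prod.mk_add_mk,
    Prod.mk_sub_mk, sub_zero, add_zero] at *
  have p3 : ((x + -1 - 1 : ℤ), (y + -1 : ℤ)) = (x - 2, y - 1) := by rw [Prod.mk.injEq]; omega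
  have p4 : ((x + -1 : ℤ), (y + -1 - 1 : ℤ)) = (x - 1, y - 2) := by rw [Prod.mk.injEq]; omega
  have p5 : ((x + -1 : ℤ), (y + -1 : ℤ)) = (x - 1, y - 1) := by rw [Prod.mk.injEq]; omega
  have p6 : ((x + -2 : ℤ), (y + -1 : ℤ)) = (x - 2, y - 1) := by rw [Prod.mk.injEq]; omega
  have p7 : ((x + 1 : ℤ), (y + -1 : ℤ)) = (x + 1, y - 1) := by rw [Prod.mk.injEq]; omega
  have p8 : ((x + 1 - 1 : ℤ), (y : ℤ)) = (x, y) := by rw [Prod.mk.injEq]; omega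
  have p11 : ((x : ℤ), (y + 1 - 1 : ℤ)) = (x, y) := by rw [Prod.mk.injEq]; omega
  have p12 : ((x + 1 - -1 : ℤ), (y - -1 : ℤ)) = (x + 2, y + 1) := by rw [Prod.mk.injEq]; omega
  have p13 : ((x - -1 : ℤ), (y + 1 - -1 : ℤ)) = (x + 1, y + 2) := by rw [Prod.mk.injEq]; omega
  have p16 : ((x + -1 - -1 : ℤ), (y + -1 - -1 : ℤ)) = (x, y) := by rw [Prod.mk.injEq]; omega
  have p17 : ((x - -2 : ℤ), (y - -1 : ℤ)) = (x + 2, y + 1) := by rw [Prod.mk.injEq]; omega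
  have p18 : ((x - 1 : ℤ), (y - -1 : ℤ)) = (x - 1, y + 1) := by rw [Prod.mk.injEq]; omega
  rw [p8, p12] at hn0
  rw [p11, p13] at hn1
  rw [p5, p3, p4, p16] at hn2
  rw [p12] at hn0ne2
  rw [p13] at hn1ne2
  rw [p5, p3] at hn2ne0
  rw [p5, p4] at hn2ne1
  rw [p6, p17] at H1
  rw [p7, p18] at H2
  rw [p5] at hcne2 hceq
  rw [p17, p18, p7, p6]
  have K0 := key_vortex (Γ 0) (Γ 1) (Γ 2) (u (x, y)) (u (x + 1, y))
    (u (x + 1, y - 1)) (u (x + 2, y + 1)) hΓ hn0 hcne0 hn0ne1 hn0ne2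
    (sub_ne_zero_of_ne H2.1) (sub_ne_zero_of_ne H1.2)
  have K1 := key_vortex (Γ 1) (Γ 2) (Γ 0) (u (x, y)) (u (x, y + 1))
    (u (x + 1, y + 2)) (u (x - 1, y + 1)) (by linear_combination hΓ)
    (by linear_combination hn1) hcne1 hn1ne2 hn1ne0
    (sub_ne_zero_of_ne H0.1) (sub_ne_zero_of_ne H2.2)
  have K2 := key_vortex (Γ 2) (Γ 0) (Γ 1) (u (x, y)) (u (x - 1, y - 1))
    (u (x - 2, y - 1)) (u (x - 1, y - 2)) (by linear_combination hΓ)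
    (by linear_combination hn2) hcne2 hn2ne0 hn2ne1
    (sub_ne_zero_of_ne H1.1) (sub_ne_zero_of_ne H0.2)
  linear_combination K0 + K1 + K2 - hceq
end

section
/- Suppose τ, ρ : ℤ³ → ℂ satisfy equations (S2) for all ν ∈ ℤ³ and all i ≠ j, with constants a_{ij} = −a_{ji}, and suppose ρ vanishes nowhere on ℤ³. Then τ satisfies the Hirota bilinear difference equation: for every ν ∈ ℤ³, a₁₂·τ(ν+δ₃)·τ(ν+δ₁+δ₂) − a₁₃·τ(ν+δ₂)·τ(ν+δ₁+δ₃) + a₂₃·τ(ν+δ₁)·τ(ν+δ₂+δ₃) = 0. -/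
theorem stmt6 (τ ρ : (Fin 3 → ℤ) → ℂ) (a : Fin 3 → Fin 3 → ℂ)
    (ha : ∀ i j, a i j = - a j i)
    (hS2 : ∀ (ν : Fin 3 → ℤ) (i j : Fin 3), i ≠ j →
      τ (ν + δZ i) * ρ (ν + δZ j) - ρ (ν + δZ i) * τ (ν + δZ j)
        = a i j * ρ ν * τ (ν + δZ i + δZ j))
    (hρ : ∀ ν, ρ ν ≠ 0) :
    ∀ ν : Fin 3 → ℤ,
      a 0 1 * τ (ν + δZ 2) * τ (ν + δZ 0 + δZ 1)
      - a 0 2 * τ (ν + δZ 1) * τ (ν + δZ 0 + δZ 2)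
      + a 1 2 * τ (ν + δZ 0) * τ (ν + δZ 1 + δZ 2) = 0 := by
  intro ν
  have h01 := hS2 ν 0 1 (by decide)
  have h02 := hS2 ν 0 2 (by decide)
  have h12 := hS2 ν 1 2 (by decide)
  have key : ρ ν * (a 0 1 * τ (ν + δZ 2) * τ (ν + δZ 0 + δZ 1)
      - a 0 2 * τ (ν + δZ 1) * τ (ν + δZ 0 + δZ 2)
      + a 1 2 * τ (ν + δZ 0) * τ (ν + δZ 1 + δZ 2)) = 0 := by
    linear_combination -(τ (ν + δZ 2) * h01) + τ (ν + δZ 1) * h02 - τ (ν + δZ 0) * h12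
  exact (mul_eq_zero.mp key).resolve_left (hρ ν)
end

section
/- (i) If σ, τ : ℤ³ → ℂ satisfy equations (S1) for all ν ∈ ℤ³ and all i ≠ j with constants a_{ij} = −a_{ji}, and τ vanishes nowhere on ℤ³, then σ satisfies the Hirota bilinear difference equation: a₁₂·σ(ν+δ₃)·σ(ν+δ₁+δ₂) − a₁₃·σ(ν+δ₂)·σ(ν+δ₁+δ₃) + a₂₃·σ(ν+δ₁)·σ(ν+δ₂+δ₃) = 0 for all ν ∈ ℤ³. (ii) If τ, ρ : ℤ³ → ℂ satisfy equations (S2) for all ν ∈ ℤ³ and all i ≠ j, and τ vanishes nowhere on ℤ³, then ρ satisfies the same Hirota bilinear difference equation (with ρ in place of σ). -/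
theorem stmt7 (a : Fin 3 → Fin 3 → ℂ) (ha : ∀ i j, a i j = - a j i) :
    (∀ σ τ : (Fin 3 → ℤ) → ℂ,
      (∀ (ν : Fin 3 → ℤ) (i j : Fin 3), i ≠ j →
        σ (ν + δZ i) * τ (ν + δZ j) - τ (ν + δZ i) * σ (ν + δZ j)
          = a i j * τ ν * σ (ν + δZ i + δZ j)) →
      (∀ ν, τ ν ≠ 0) →
      ∀ ν : Fin 3 → ℤ,
        a 0 1 * σ (ν + δZ 2) * σ (ν + δZ 0 + δZ 1)
        - a 0 2 * σ (ν + δZ 1) * σ (ν + δZ 0 + δZ 2)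
        + a 1 2 * σ (ν + δZ 0) * σ (ν + δZ 1 + δZ 2) = 0) ∧
    (∀ τ ρ : (Fin 3 → ℤ) → ℂ,
      (∀ (ν : Fin 3 → ℤ) (i j : Fin 3), i ≠ j →
        τ (ν + δZ i) * ρ (ν + δZ j) - ρ (ν + δZ i) * τ (ν + δZ j)
          = a i j * ρ ν * τ (ν + δZ i + δZ j)) →
      (∀ ν, τ ν ≠ 0) →
      ∀ ν : Fin 3 → ℤ,
        a 0 1 * ρ (ν + δZ 2) * ρ (ν + δZ 0 + δZ 1)
        - a 0 2 * ρ (ν + δZ 1) * ρ (ν + δZ 0 + δZ 2)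
        + a 1 2 * ρ (ν + δZ 0) * ρ (ν + δZ 1 + δZ 2) = 0) := by
  constructor
  · intro σ τ hS hτ ν
    have h01 := hS ν 0 1 (by decide)
    have h02 := hS ν 0 2 (by decide)
    have h12 := hS ν 1 2 (by decide)
    have key : (a 0 1 * σ (ν + δZ 2) * σ (ν + δZ 0 + δZ 1)
        - a 0 2 * σ (ν + δZ 1) * σ (ν + δZ 0 + δZ 2)
        + a 1 2 * σ (ν + δZ 0) * σ (ν + δZ 1 + δZ 2)) * τ ν = 0 := by
      linear_combination -σ (ν + δZ 2) * h01 + σ (ν + δZ 1) * h02 - σ (ν + δZ 0) * h12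
    exact (mul_eq_zero.mp key).resolve_right (hτ ν)
  · intro τ ρ hS hτ ν
    have h1 := hS (ν + δZ 2) 0 1 (by decide)
    have h2 := hS (ν + δZ 1) 0 2 (by decide)
    have h3 := hS (ν + δZ 0) 1 2 (by decide)
    rw [show ν + δZ 2 + δZ 0 = ν + δZ 0 + δZ 2 by abel,
        show ν + δZ 2 + δZ 1 = ν + δZ 1 + δZ 2 by abel,
        show ν + δZ 0 + δZ 2 + δZ 1 = ν + δZ 0 + δZ 1 + δZ 2 by abel] at h1
    rw [show ν + δZ 1 + δZ 0 = ν + δZ 0 + δZ 1 by abel] at h2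
    have key : (a 0 1 * ρ (ν + δZ 2) * ρ (ν + δZ 0 + δZ 1)
        - a 0 2 * ρ (ν + δZ 1) * ρ (ν + δZ 0 + δZ 2)
        + a 1 2 * ρ (ν + δZ 0) * ρ (ν + δZ 1 + δZ 2)) * τ (ν + δZ 0 + δZ 1 + δZ 2) = 0 := by
      linear_combination -ρ (ν + δZ 0 + δZ 1) * h1 + ρ (ν + δZ 0 + δZ 2) * h2
        - ρ (ν + δZ 1 + δZ 2) * h3
    exact (mul_eq_zero.mp key).resolve_right (hτ _)
end

section
/- (i) If σ, τ : ℤ³ → ℂ satisfy equations (S1) for all ν ∈ ℤ³ and all i ≠ j with constants a_{ij} = −a_{ji}, and τ vanishes nowhere on ℤ³, then for all ν ∈ ℤ³: a₁₂·τ(ν+δ₃)·σ(ν+δ₁+δ₂) − a₁₃·τ(ν+δ₂)·σ(ν+δ₁+δ₃) + a₂₃·τ(ν+δ₁)·σ(ν+δ₂+δ₃) = 0. (ii) If τ, ρ : ℤ³ → ℂ satisfy equations (S2) for all ν ∈ ℤ³ and all i ≠ j, and ρ vanishes nowhere on ℤ³, then for all ν ∈ ℤ³: a₁₂·ρ(ν+δ₃)·τ(ν+δ₁+δ₂)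 − a₁₃·ρ(ν+δ₂)·τ(ν+δ₁+δ₃) + a₂₃·ρ(ν+δ₁)·τ(ν+δ₂+δ₃) = 0. (These identities express that σ → τ → ρ are Bäcklund transformations between solutions of the Hirota bilinear difference equation.) -/
lemma stmt8_aux (a : Fin 3 → Fin 3 → ℂ) (f g : (Fin 3 → ℤ) → ℂ)
    (h : ∀ (ν : Fin 3 → ℤ) (i j : Fin 3), i ≠ j →
      f (ν + δZ i) * g (ν + δZ j) - g (ν + δZ i) * f (ν + δZ j)
        = a i j * g ν * f (ν + δZ i + δZ j))
    (hg : ∀ ν, g ν ≠ 0) (ν : Fin 3 → ℤ) :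
    a 0 1 * g (ν + δZ 2) * f (ν + δZ 0 + δZ 1)
    - a 0 2 * g (ν + δZ 1) * f (ν + δZ 0 + δZ 2)
    + a 1 2 * g (ν + δZ 0) * f (ν + δZ 1 + δZ 2) = 0 := by
  apply mul_left_cancel₀ (hg ν)
  have h01 := h ν 0 1 (by decide)
  have h02 := h ν 0 2 (by decide)
  have h12 := h ν 1 2 (by decide)
  linear_combination - g (ν + δZ 2) * h01 + g (ν + δZ 1) * h02 - g (ν + δZ 0) * h12

theorem stmt8 (a : Fin 3 → Fin 3 → ℂ) (ha : ∀ i j, a i j = - a j i) :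
    (∀ σ τ : (Fin 3 → ℤ) → ℂ,
      (∀ (ν : Fin 3 → ℤ) (i j : Fin 3), i ≠ j →
        σ (ν + δZ i) * τ (ν + δZ j) - τ (ν + δZ i) * σ (ν + δZ j)
          = a i j * τ ν * σ (ν + δZ i + δZ j)) →
      (∀ ν, τ ν ≠ 0) →
      ∀ ν : Fin 3 → ℤ,
        a 0 1 * τ (ν + δZ 2) * σ (ν + δZ 0 + δZ 1)
        - a 0 2 * τ (ν + δZ 1) * σ (ν + δZ 0 + δZ 2)
        + a 1 2 * τ (ν + δZ 0) * σ (ν + δZ 1 + δZ 2) = 0) ∧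
    (∀ τ ρ : (Fin 3 → ℤ) → ℂ,
      (∀ (ν : Fin 3 → ℤ) (i j : Fin 3), i ≠ j →
        τ (ν + δZ i) * ρ (ν + δZ j) - ρ (ν + δZ i) * τ (ν + δZ j)
          = a i j * ρ ν * τ (ν + δZ i + δZ j)) →
      (∀ ν, ρ ν ≠ 0) →
      ∀ ν : Fin 3 → ℤ,
        a 0 1 * ρ (ν + δZ 2) * τ (ν + δZ 0 + δZ 1)
        - a 0 2 * ρ (ν + δZ 1) * τ (ν + δZ 0 + δZ 2)
        + a 1 2 * ρ (ν + δZ 0) * τ (ν + δZ 1 + δZ 2) = 0) := by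
  exact ⟨fun σ τ h hτ ν => stmt8_aux a σ τ h hτ ν,
         fun τ ρ h hρ ν => stmt8_aux a τ ρ h hρ ν⟩
end

section
/- If σ, τ : ℤ³ → ℂ satisfy equations (S1) for all ν ∈ ℤ³ and all i ≠ j with constants a_{ij} = −a_{ji}, and both σ and τ vanish nowhere on ℤ³, then for all ν ∈ ℤ³: a₁₂·a₁₃·a₂₃·τ(ν)·σ(ν+δ₁+δ₂+δ₃) = a₂₃·σ(ν+δ₁)·τ(ν+δ₂+δ₃) − a₁₃·σ(ν+δ₂)·τ(ν+δ₁+δ₃) + a₁₂·σ(ν+δ₃)·τ(ν+δ₁+δ₂). -/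
theorem stmt9 (σ τ : (Fin 3 → ℤ) → ℂ) (a : Fin 3 → Fin 3 → ℂ)
    (ha : ∀ i j, a i j = - a j i)
    (hS1 : ∀ (ν : Fin 3 → ℤ) (i j : Fin 3), i ≠ j →
      σ (ν + δZ i) * τ (ν + δZ j) - τ (ν + δZ i) * σ (ν + δZ j)
        = a i j * τ ν * σ (ν + δZ i + δZ j))
    (hσ : ∀ ν, σ ν ≠ 0) (hτ : ∀ ν, τ ν ≠ 0) :
    ∀ ν : Fin 3 → ℤ,
      a 0 1 * a 0 2 * a 1 2 * τ ν * σ (ν + δZ 0 + δZ 1 + δZ 2)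
      = a 1 2 * σ (ν + δZ 0) * τ (ν + δZ 1 + δZ 2)
      - a 0 2 * σ (ν + δZ 1) * τ (ν + δZ 0 + δZ 2)
      + a 0 1 * σ (ν + δZ 2) * τ (ν + δZ 0 + δZ 1) := by
  intro ν
  have e1 := hS1 (ν + δZ 0) 1 2 (by decide)
  have e2 := hS1 (ν + δZ 1) 0 2 (by decide)
  have e3 := hS1 (ν + δZ 2) 0 1 (by decide)
  have e02 := hS1 ν 0 2 (by decide)
  have e12 := hS1 ν 1 2 (by decide)
  rw [show ν + δZ 1 + δZ 0 = ν + δZ 0 + δZ 1 from by abel] at e2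
  rw [show ν + δZ 2 + δZ 0 = ν + δZ 0 + δZ 2 from by abel,
      show ν + δZ 2 + δZ 1 = ν + δZ 1 + δZ 2 from by abel,
      show ν + δZ 0 + δZ 2 + δZ 1 = ν + δZ 0 + δZ 1 + δZ 2 from by abel] at e3
  refine mul_right_cancel₀
    (mul_ne_zero (mul_ne_zero (hτ ν) (hτ (ν + δZ 2))) (hσ (ν + δZ 0 + δZ 1 + δZ 2))) ?_
  linear_combination
    (τ ν * σ (ν + δZ 2) * τ (ν + δZ 0 + δZ 1)
      - a 0 2 * a 1 2 * (τ ν)^2 * σ (ν + δZ 0 + δZ 1 + δZ 2)) * e3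
    - (a 1 2 * τ ν * τ (ν + δZ 1 + δZ 2) * σ (ν + δZ 0 + δZ 1 + δZ 2)) * e02
    + (a 0 2 * τ ν * τ (ν + δZ 0 + δZ 2) * σ (ν + δZ 0 + δZ 1 + δZ 2)) * e12
    + (τ ν * σ (ν + δZ 2) * τ (ν + δZ 1 + δZ 2)) * e1
    - (τ ν * σ (ν + δZ 2) * τ (ν + δZ 0 + δZ 2)) * e2
end

section
/- If σ, τ, ρ : ℤ³ → ℂ satisfy the full bilinear system (S1)–(S3) for all ν ∈ ℤ³ and all i ≠ j, with constants a_{ij} = −a_{ji} and b_{ij} = b_{ji}, and both τ and ρ vanish nowhere on ℤ³, then the constants necessarily obey the compatibility condition a₁₂·b₁₂ − a₁₃·b₁₃ + a₂₃·b₂₃ = 0. -/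
theorem stmt10 (σ τ ρ : (Fin 3 → ℤ) → ℂ) (a b : Fin 3 → Fin 3 → ℂ)
    (ha : ∀ i j, a i j = - a j i) (hb : ∀ i j, b i j = b j i)
    (hS1 : ∀ (ν : Fin 3 → ℤ) (i j : Fin 3), i ≠ j →
      σ (ν + δZ i) * τ (ν + δZ j) - τ (ν + δZ i) * σ (ν + δZ j)
        = a i j * τ ν * σ (ν + δZ i + δZ j))
    (hS2 : ∀ (ν : Fin 3 → ℤ) (i j : Fin 3), i ≠ j →
      τ (ν + δZ i) * ρ (ν + δZ j) - ρ (ν + δZ i) * τ (ν + δZ j)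
        = a i j * ρ ν * τ (ν + δZ i + δZ j))
    (hS3 : ∀ (ν : Fin 3 → ℤ) (i j : Fin 3), i ≠ j →
      τ ν * τ (ν + δZ i + δZ j) + ρ ν * σ (ν + δZ i + δZ j)
        = b i j * τ (ν + δZ i) * τ (ν + δZ j))
    (hτ : ∀ ν, τ ν ≠ 0) (hρ : ∀ ν, ρ ν ≠ 0) :
    a 0 1 * b 0 1 - a 0 2 * b 0 2 + a 1 2 * b 1 2 = 0 := by
  set ν : Fin 3 → ℤ := 0 with hνdef
  have E12 := hS2 ν 0 1 (by decide)
  have E13 := hS2 ν 0 2 (by decide)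
  have E23 := hS2 ν 1 2 (by decide)
  have F12 := hS1 ν 0 1 (by decide)
  have F13 := hS1 ν 0 2 (by decide)
  have F23 := hS1 ν 1 2 (by decide)
  have G12 := hS3 ν 0 1 (by decide)
  have G13 := hS3 ν 0 2 (by decide)
  have G23 := hS3 ν 1 2 (by decide)
  -- Y := a01 τ12 τ3 - a02 τ13 τ2 + a12 τ23 τ1 = 0
  have hY : a 0 1 * τ (ν + δZ 0 + δZ 1) * τ (ν + δZ 2)
      - a 0 2 * τ (ν + δZ 0 + δZ 2) * τ (ν + δZ 1)
      + a 1 2 * τ (ν + δZ 1 + δZ 2) * τ (ν + δZ 0) = 0 := by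
    have h : ρ ν * (a 0 1 * τ (ν + δZ 0 + δZ 1) * τ (ν + δZ 2)
        - a 0 2 * τ (ν + δZ 0 + δZ 2) * τ (ν + δZ 1)
        + a 1 2 * τ (ν + δZ 1 + δZ 2) * τ (ν + δZ 0)) = 0 := by
      linear_combination (-(τ (ν + δZ 2))) * E12 + τ (ν + δZ 1) * E13
        - τ (ν + δZ 0) * E23
    exact (mul_eq_zero.mp h).resolve_left (hρ ν)
  -- X := a01 σ12 τ3 - a02 σ13 τ2 + a12 σ23 τ1 = 0
  have hX : a 0 1 * σ (ν + δZ 0 + δZ 1) * τ (ν + δZ 2)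
      - a 0 2 * σ (ν + δZ 0 + δZ 2) * τ (ν + δZ 1)
      + a 1 2 * σ (ν + δZ 1 + δZ 2) * τ (ν + δZ 0) = 0 := by
    have h : τ ν * (a 0 1 * σ (ν + δZ 0 + δZ 1) * τ (ν + δZ 2)
        - a 0 2 * σ (ν + δZ 0 + δZ 2) * τ (ν + δZ 1)
        + a 1 2 * σ (ν + δZ 1 + δZ 2) * τ (ν + δZ 0)) = 0 := by
      linear_combination (-(τ (ν + δZ 2))) * F12 + τ (ν + δZ 1) * F13
        - τ (ν + δZ 0) * F23
    exact (mul_eq_zero.mp h).resolve_left (hτ ν)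
  have hC : (a 0 1 * b 0 1 - a 0 2 * b 0 2 + a 1 2 * b 1 2)
      * (τ (ν + δZ 0) * τ (ν + δZ 1) * τ (ν + δZ 2)) = 0 := by
    linear_combination (-(a 0 1 * τ (ν + δZ 2))) * G12
      + (a 0 2 * τ (ν + δZ 1)) * G13 - (a 1 2 * τ (ν + δZ 0)) * G23
      + τ ν * hY + ρ ν * hX
  exact (mul_eq_zero.mp hC).resolve_right
    (mul_ne_zero (mul_ne_zero (hτ _) (hτ _)) (hτ _))
end

section
/- (i) If σ, τ, ρ : ℤ³ → ℂ satisfy equations (S1) and (S3) for all ν ∈ ℤ³ and all i ≠ j, and τ vanishes nowhere on ℤ³, then for every permutation (i,j,k) of (1,2,3) and all ν ∈ ℤ³: a_{ij}·τ(ν)·σ(ν+δ₁+δ₂+δ₃) = −b_{ik}·τ(ν+δᵢ)·σ(ν+δⱼ+δₖ) + b_{jk}·τ(ν+δⱼ)·σ(ν+δᵢ+δₖ). (ii) If σ, τ, ρ satisfy equations (S2) and (S3) for all ν ∈ ℤ³ and all i ≠ j, and τ vanishes nowhere on ℤ³, then for every permutation (i,j,k) of (1,2,3) and all ν ∈ ℤ³: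 a_{ij}·ρ(ν)·τ(ν+δ₁+δ₂+δ₃) = b_{jk}·ρ(ν+δⱼ)·τ(ν+δᵢ+δₖ) − b_{ik}·ρ(ν+δᵢ)·τ(ν+δⱼ+δₖ). -/
lemma addδ (i j k : Fin 3) (hij : i ≠ j) (hjk : j ≠ k) (hik : i ≠ k) (ν : Fin 3 → ℤ) :
    ν + δZ i + δZ j + δZ k = ν + δZ 0 + δZ 1 + δZ 2 := by
  have h : δZ i + (δZ j + δZ k) = δZ 0 + (δZ 1 + δZ 2) := by
    revert hij hjk hik
    fin_cases i <;> fin_cases j <;> fin_cases k <;> decide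
  simp only [add_assoc, h]

theorem stmt11 (σ τ ρ : (Fin 3 → ℤ) → ℂ) (a b : Fin 3 → Fin 3 → ℂ)
    (ha : ∀ i j, a i j = - a j i) (hb : ∀ i j, b i j = b j i)
    (hS3 : ∀ (ν : Fin 3 → ℤ) (i j : Fin 3), i ≠ j →
      τ ν * τ (ν + δZ i + δZ j) + ρ ν * σ (ν + δZ i + δZ j)
        = b i j * τ (ν + δZ i) * τ (ν + δZ j))
    (hτ : ∀ ν, τ ν ≠ 0) :
    ((∀ (ν : Fin 3 → ℤ) (i j : Fin 3), i ≠ j →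
        σ (ν + δZ i) * τ (ν + δZ j) - τ (ν + δZ i) * σ (ν + δZ j)
          = a i j * τ ν * σ (ν + δZ i + δZ j)) →
      ∀ (i j k : Fin 3), i ≠ j → j ≠ k → i ≠ k → ∀ ν : Fin 3 → ℤ,
        a i j * τ ν * σ (ν + δZ 0 + δZ 1 + δZ 2)
          = - b i k * τ (ν + δZ i) * σ (ν + δZ j + δZ k)
            + b j k * τ (ν + δZ j) * σ (ν + δZ i + δZ k)) ∧
    ((∀ (ν : Fin 3 → ℤ) (i j : Fin 3), i ≠ j →
        τ (ν + δZ i) * ρ (ν + δZ j) - ρ (ν + δZ i) * τ (ν + δZ j)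
          = a i j * ρ ν * τ (ν + δZ i + δZ j)) →
      ∀ (i j k : Fin 3), i ≠ j → j ≠ k → i ≠ k → ∀ ν : Fin 3 → ℤ,
        a i j * ρ ν * τ (ν + δZ 0 + δZ 1 + δZ 2)
          = b j k * ρ (ν + δZ j) * τ (ν + δZ i + δZ k)
            - b i k * ρ (ν + δZ i) * τ (ν + δZ j + δZ k)) := by
  constructor
  · intro hS1 i j k hij hjk hik ν
    have h1 := hS1 (ν + δZ k) i j hij
    have h2 := hS3 ν i k hik
    have h3 := hS3 ν j k hjk
    rw [add_right_comm ν (δZ k) (δZ i), add_right_comm ν (δZ k) (δZ j)] at h1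
    rw [show ν + δZ i + δZ k + δZ j = ν + δZ 0 + δZ 1 + δZ 2 from
      addδ i k j hik (Ne.symm hjk) hij ν] at h1
    apply mul_left_cancel₀ (hτ (ν + δZ k))
    linear_combination -τ ν * h1 - σ (ν + δZ j + δZ k) * h2 + σ (ν + δZ i + δZ k) * h3
  · intro hS2 i j k hij hjk hik ν
    have h1 := hS2 ν i j hij
    have h2 := hS3 (ν + δZ i) j k hjk
    have h3 := hS3 (ν + δZ j) i k hik
    rw [show ν + δZ i + δZ j + δZ k = ν + δZ 0 + δZ 1 + δZ 2 from addδ i j k hij hjk hik ν] at h2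
    rw [add_right_comm ν (δZ j) (δZ i)] at h3
    rw [show ν + δZ i + δZ j + δZ k = ν + δZ 0 + δZ 1 + δZ 2 from addδ i j k hij hjk hik ν] at h3
    apply mul_left_cancel₀ (hτ (ν + δZ i + δZ j))
    linear_combination -τ (ν + δZ 0 + δZ 1 + δZ 2) * h1 + ρ (ν + δZ j) * h2 - ρ (ν + δZ i) * h3
end

section
/- Let σ, τ, ρ : ℤ³ → ℂ satisfy equations (S1), (S2), (S3) for the pairs (i,j) = (1,3) and (2,3) for all ν ∈ ℤ³, together with the coincident-index equation (S3*): τ(ν)·τ(ν+2δ₃) + ρ(ν)·σ(ν+2δ₃) = b₃₃·τ(ν+δ₃)² for all ν ∈ ℤ³, where b₃₃ is a constant. Assume b₁₃, b₂₃, b₃₃ are nonzero and τ vanishes nowhere on ℤ³. Define E(ν) = b₁₃^{−ν₁}·b₂₃^{−ν₂}·b₃₃^{−ν₃}, Q(ν) = (E(ν)/b₃₃)·σ(ν+δ₃)/τ(ν) and R(ν) = E(ν)^{−1}·ρ(ν−δ₃)/τ(ν). Then for α ∈ {1,2}, setting ξ_α = a_{α3}·b_{α3}, the Ablowitz–Ladik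 equations hold for all ν ∈ ℤ³: Q(ν+δ_α−δ₃) − Q(ν) = ξ_α·[1 − R(ν)·Q(ν+δ_α−δ₃)]·Q(ν+δ_α) and R(ν) − R(ν+δ_α−δ₃) = ξ_α·[1 − R(ν)·Q(ν+δ_α−δ₃)]·R(ν−δ₃). -/
theorem prod_zpow_neg_add_δZ {K : Type*} [Field K] (c : Fin 3 → K) (ν : Fin 3 → ℤ)
    (i : Fin 3) (hc : c i ≠ 0) :
    ∏ k, c k ^ (-(ν + δZ i) k) = (∏ k, c k ^ (-ν k)) / c i := by
  have h : ∀ k, c k ^ (-(ν + δZ i) k) = c k ^ (-ν k) * if k = i then (c i)⁻¹ else 1 := by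
    intro k
    by_cases hk : k = i
    · subst hk
      simp [δZ, zpow_add₀ hc, mul_comm]
    · simp [δZ, hk]
  simp only [h, Finset.prod_mul_distrib, Finset.prod_ite_eq', Finset.mem_univ, if_true,
    div_eq_mul_inv]

section AblowitzLadik

variable {G : Type*} [AddCommGroup G]

theorem ablowitzLadik_Q (σ τ ρ E Q R : G → ℂ) (d e : G) (A β γ : ℂ)
    (hS1 : ∀ ν, σ (ν + d) * τ (ν + e) - τ (ν + d) * σ (ν + e) = A * τ ν * σ (ν + d + e))
    (hS3 : ∀ ν, τ ν * τ (ν + d + e) + ρ ν * σ (ν + d + e) = β * τ (ν + d) * τ (ν + e))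
    (hS3' : ∀ ν, τ ν * τ (ν + e + e) + ρ ν * σ (ν + e + e) = γ * τ (ν + e) ^ 2)
    (hβ : β ≠ 0) (hγ : γ ≠ 0) (hτ : ∀ ν, τ ν ≠ 0) (hE : ∀ ν, E ν ≠ 0)
    (hEd : ∀ ν, E (ν + d) = E ν / β) (hEe : ∀ ν, E (ν + e) = E ν / γ)
    (hQ : ∀ ν, Q ν = E ν / γ * σ (ν + e) / τ ν)
    (hR : ∀ ν, R ν = (E ν)⁻¹ * ρ (ν - e) / τ ν) (ν : G) :
    Q (ν + d - e) - Q ν = A * β * (1 - R ν * Q (ν + d - e)) * Q (ν + d) := by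
  obtain ⟨μ, rfl⟩ : ∃ μ, ν = μ + e := ⟨ν - e, by abel⟩
  have hS1e := hS1 (μ + e)
  simp only [add_right_comm _ e d] at hS1e
  simp only [hQ, hR, add_sub_cancel_right, add_right_comm _ e d, hEd, hEe]
  have := hτ μ
  have := hτ (μ + e)
  have := hτ (μ + d)
  have := hτ (μ + d + e)
  have := hE μ
  field_simp
  refine mul_left_cancel₀ (hτ (μ + e)) ?_
  linear_combination (-(σ (μ + d + e) * τ (μ + d + e))) * hS3' μ
    + (σ (μ + e + e) * τ (μ + d + e) + A * σ (μ + d + e + e) * τ (μ + e)) * hS3 μ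
    + (τ μ * τ (μ + d + e)) * hS1e

theorem ablowitzLadik_R (σ τ ρ E Q R : G → ℂ) (d e : G) (A β γ : ℂ)
    (hS2 : ∀ ν, τ (ν + d) * ρ (ν + e) - ρ (ν + d) * τ (ν + e) = A * ρ ν * τ (ν + d + e))
    (hS3 : ∀ ν, τ ν * τ (ν + d + e) + ρ ν * σ (ν + d + e) = β * τ (ν + d) * τ (ν + e))
    (hS3' : ∀ ν, τ ν * τ (ν + e + e) + ρ ν * σ (ν + e + e) = γ * τ (ν + e) ^ 2)
    (hβ : β ≠ 0) (hγ : γ ≠ 0) (hτ : ∀ ν, τ ν ≠ 0) (hE : ∀ ν, E ν ≠ 0)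
    (hEd : ∀ ν, E (ν + d) = E ν / β) (hEe : ∀ ν, E (ν + e) = E ν / γ)
    (hQ : ∀ ν, Q ν = E ν / γ * σ (ν + e) / τ ν)
    (hR : ∀ ν, R ν = (E ν)⁻¹ * ρ (ν - e) / τ ν) (ν : G) :
    R ν - R (ν + d - e) = A * β * (1 - R ν * Q (ν + d - e)) * R (ν - e) := by
  obtain ⟨μ, rfl⟩ : ∃ μ, ν = μ + e := ⟨ν - e, by abel⟩
  have hS2e := hS2 (μ - e)
  simp only [sub_add_eq_add_sub, add_sub_cancel_right] at hS2e
  have hS3'de := hS3' (μ + d - e)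
  simp only [sub_add_cancel] at hS3'de
  simp only [hQ, hR, add_sub_cancel_right, add_right_comm _ e d, hEd, hEe]
  have := hτ μ
  have := hτ (μ + e)
  have := hτ (μ + d)
  have := hE μ
  field_simp
  refine mul_left_cancel₀ (hτ (μ + d)) ?_
  linear_combination (-(τ μ * ρ μ)) * hS3'de
    + (τ μ * ρ (μ + d - e) + A * ρ (μ - e) * τ (μ + d)) * hS3 μ
    + (τ μ * τ (μ + d + e)) * hS2e

end AblowitzLadik

theorem stmt12 (σ τ ρ : (Fin 3 → ℤ) → ℂ) (a b : Fin 3 → Fin 3 → ℂ) (b33 : ℂ)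
    (hS1 : ∀ (ν : Fin 3 → ℤ) (i : Fin 3), i = 0 ∨ i = 1 →
      σ (ν + δZ i) * τ (ν + δZ 2) - τ (ν + δZ i) * σ (ν + δZ 2)
        = a i 2 * τ ν * σ (ν + δZ i + δZ 2))
    (hS2 : ∀ (ν : Fin 3 → ℤ) (i : Fin 3), i = 0 ∨ i = 1 →
      τ (ν + δZ i) * ρ (ν + δZ 2) - ρ (ν + δZ i) * τ (ν + δZ 2)
        = a i 2 * ρ ν * τ (ν + δZ i + δZ 2))
    (hS3 : ∀ (ν : Fin 3 → ℤ) (i : Fin 3), i = 0 ∨ i = 1 →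
      τ ν * τ (ν + δZ i + δZ 2) + ρ ν * σ (ν + δZ i + δZ 2)
        = b i 2 * τ (ν + δZ i) * τ (ν + δZ 2))
    (hS3' : ∀ ν : Fin 3 → ℤ,
      τ ν * τ (ν + δZ 2 + δZ 2) + ρ ν * σ (ν + δZ 2 + δZ 2)
        = b33 * (τ (ν + δZ 2)) ^ 2)
    (hb13 : b 0 2 ≠ 0) (hb23 : b 1 2 ≠ 0) (hb33 : b33 ≠ 0)
    (hτ : ∀ ν, τ ν ≠ 0)
    (E Q R : (Fin 3 → ℤ) → ℂ)
    (hE : ∀ ν : Fin 3 → ℤ,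
      E ν = (b 0 2) ^ (-ν 0) * (b 1 2) ^ (-ν 1) * b33 ^ (-ν 2))
    (hQ : ∀ ν : Fin 3 → ℤ, Q ν = (E ν / b33) * σ (ν + δZ 2) / τ ν)
    (hR : ∀ ν : Fin 3 → ℤ, R ν = (E ν)⁻¹ * ρ (ν - δZ 2) / τ ν) :
    ∀ α : Fin 3, α = 0 ∨ α = 1 → ∀ ν : Fin 3 → ℤ,
      (Q (ν + δZ α - δZ 2) - Q ν
        = (a α 2 * b α 2) * (1 - R ν * Q (ν + δZ α - δZ 2)) * Q (ν + δZ α)) ∧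
      (R ν - R (ν + δZ α - δZ 2)
        = (a α 2 * b α 2) * (1 - R ν * Q (ν + δZ α - δZ 2)) * R (ν - δZ 2)) := by
  intro α hα ν
  set c : Fin 3 → ℂ := ![b 0 2, b 1 2, b33]
  have hc : ∀ k, c k ≠ 0 := by
    intro k
    fin_cases k <;> assumption
  have hcα : c α = b α 2 := by rcases hα with rfl | rfl <;> rfl
  have hEprod : ∀ ν, E ν = ∏ k, c k ^ (-ν k) := fun ν => by rw [hE, Fin.prod_univ_three]; rfl
  have hEshift : ∀ i ν, E (ν + δZ i) = E ν / c i := by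
    intro i ν
    rw [hEprod, hEprod, prod_zpow_neg_add_δZ c ν i (hc i)]
  have hE0 : ∀ ν, E ν ≠ 0 := fun ν =>
    hEprod ν ▸ Finset.prod_ne_zero_iff.2 fun k _ => zpow_ne_zero _ (hc k)
  have hEd : ∀ ν, E (ν + δZ α) = E ν / b α 2 := hcα ▸ hEshift α
  have hbα : b α 2 ≠ 0 := hcα ▸ hc α
  exact ⟨ablowitzLadik_Q σ τ ρ E Q R _ _ _ _ _ (fun ν => hS1 ν α hα) (fun ν => hS3 ν α hα) hS3'
      hbα hb33 hτ hE0 hEd (hEshift 2) hQ hR ν,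
    ablowitzLadik_R σ τ ρ E Q R _ _ _ _ _ (fun ν => hS2 ν α hα) (fun ν => hS3 ν α hα) hS3'
      hbα hb33 hτ hE0 hEd (hEshift 2) hQ hR ν⟩
end

section
/- For every sequence ω : ℤ → ℂ, all ξ, η ∈ ℂ, every m ∈ ℤ and every integer ℓ ≥ 0, the Toeplitz determinants satisfy: (ξ − η)·A(m+1, ℓ+1, ω)·A(m, ℓ, S_ξS_ηω) = A(m, ℓ, S_ξω)·A(m+1, ℓ+1, S_ηω) − A(m+1, ℓ+1, S_ξω)·A(m, ℓ, S_ηω). -/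
open Matrix

/-- The `ℓ×ℓ` Toeplitz determinant `A(m,ℓ,ω) = det(ω(m−a+b))_{a,b=1,…,ℓ}`
(equal to `1` when `ℓ = 0`). -/
noncomputable def Toep (m : ℤ) (ℓ : ℕ) (ω : ℤ → ℂ) : ℂ :=
  Matrix.det (Matrix.of fun a b : Fin ℓ => ω (m - (a : ℤ) + (b : ℤ)))

/-- The shifted sequence `(S_ζ ω)(m) = ω(m+1) − ζ·ω(m)`. -/
def Sh (ζ : ℂ) (ω : ℤ → ℂ) : ℤ → ℂ := fun m => ω (m + 1) - ζ * ω m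


private lemma det_row_single {k : ℕ} (A : Matrix (Fin (k+1)) (Fin (k+1)) ℂ) (i j : Fin (k+1))
    (h : ∀ j', A i j' = if j' = j then 1 else 0) :
    A.det = (-1)^((i:ℕ)+(j:ℕ)) * (A.submatrix i.succAbove j.succAbove).det := by
  rw [Matrix.det_succ_row A i, Finset.sum_eq_single j]
  · rw [h j, if_pos rfl, mul_one]
  · intro b _ hb; rw [h b, if_neg hb, mul_zero, zero_mul]
  · intro hj; exact absurd (Finset.mem_univ j) hj

private lemma det_colop {k : ℕ} (ζ : ℂ) (M : Matrix (Fin (k+1)) (Fin (k+1)) ℂ) :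
    M.det = Matrix.det (Matrix.of fun a b =>
      Fin.cases (M a 0) (fun b' => M a b'.succ - ζ * M a b'.castSucc) b) := by
  set L : Matrix (Fin (k+1)) (Fin (k+1)) ℂ :=
    Matrix.of (fun c b => (if b = c then (1:ℂ) else 0)
      - ζ * (if (b:ℕ) = (c:ℕ)+1 then 1 else 0)) with hL
  have hLdet : L.det = 1 := by
    have htri : L.BlockTriangular id := by
      intro i j hij
      have h1 : j ≠ i := ne_of_lt hij
      have h2 : (j:ℕ) ≠ (i:ℕ)+1 := by
        have : (j:ℕ) < (i:ℕ) := hij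
        omega
      simp only [hL, Matrix.of_apply, if_neg h1, if_neg h2]
      ring
    rw [Matrix.det_of_upperTriangular htri]
    apply Finset.prod_eq_one
    intro i _
    have : ((i:ℕ) ≠ (i:ℕ)+1) := by omega
    simp [hL, this]
  have hmul : M * L = Matrix.of (fun a b =>
      Fin.cases (M a 0) (fun b' => M a b'.succ - ζ * M a b'.castSucc) b) := by
    ext a b
    rw [Matrix.mul_apply]
    have hsplit : ∀ c : Fin (k+1), M a c * L c b
        = (if b = c then M a c else 0) - ζ * (if (b:ℕ) = (c:ℕ)+1 then M a c else 0) := by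
      intro c
      simp only [hL, Matrix.of_apply]
      split_ifs <;> ring
    rw [Finset.sum_congr rfl fun c _ => hsplit c, Finset.sum_sub_distrib, ← Finset.mul_sum,
      Finset.sum_ite_eq, if_pos (Finset.mem_univ b)]
    induction b using Fin.cases with
    | zero =>
        rw [Finset.sum_eq_zero (fun c _ => by
          rw [if_neg]
          simp)]
        simp
    | succ b' =>
        rw [Finset.sum_eq_single b'.castSucc]
        · simp [Fin.val_succ]
        · intro c _ hc
          have hn : ¬((b'.succ : Fin (k+1)) : ℕ) = (c:ℕ)+1 := by
            intro hcon
            apply hc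
            apply Fin.ext
            simp only [Fin.val_succ] at hcon
            simp only [Fin.coe_castSucc]
            omega
          rw [if_neg hn]
        · intro hmem; exact absurd (Finset.mem_univ _) hmem
  rw [← hmul, Matrix.det_mul, hLdet, mul_one]
private lemma det_sh (m : ℤ) (ℓ : ℕ) (ζ : ℂ) (ω : ℤ → ℂ) :
    Matrix.det (Matrix.of (Fin.cons (fun b : Fin (ℓ+1) => ζ^(b:ℕ))
      (fun (a : Fin ℓ) (b : Fin (ℓ+1)) => ω (m - (a:ℤ) + (b:ℤ))))) = Toep m ℓ (Sh ζ ω) := by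
  set M : Matrix (Fin (ℓ+1)) (Fin (ℓ+1)) ℂ := Matrix.of (Fin.cons (fun b : Fin (ℓ+1) => ζ^(b:ℕ))
      (fun (a : Fin ℓ) (b : Fin (ℓ+1)) => ω (m - (a:ℤ) + (b:ℤ)))) with hM
  rw [det_colop ζ M]
  set A : Matrix (Fin (ℓ+1)) (Fin (ℓ+1)) ℂ := Matrix.of fun a b =>
      Fin.cases (M a 0) (fun b' => M a b'.succ - ζ * M a b'.castSucc) b with hA
  have hrow : ∀ j', A 0 j' = if j' = 0 then 1 else 0 := by
    intro j'
    induction j' using Fin.cases with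
    | zero => simp [hA, hM]
    | succ b' =>
        have : (Fin.succ b' : Fin (ℓ+1)) ≠ 0 := Fin.succ_ne_zero b'
        rw [if_neg this]
        simp only [hA, Matrix.of_apply, Fin.cases_succ, hM, Fin.cons_zero]
        rw [Fin.val_succ, Fin.coe_castSucc, pow_succ]
        ring
  rw [det_row_single A 0 0 hrow]
  have hsub : A.submatrix (Fin.succAbove 0) (Fin.succAbove 0)
      = Matrix.of (fun a b : Fin ℓ => Sh ζ ω (m - (a : ℤ) + (b : ℤ))) := by
    ext a b
    simp only [Matrix.submatrix_apply, Fin.succAbove_zero, hA, Matrix.of_apply, Fin.cases_succ,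
      hM, Fin.cons_succ]
    show ω (m - (a:ℤ) + ((b.succ : Fin (ℓ+1)):ℤ)) - ζ * ω (m - (a:ℤ) + ((b.castSucc : Fin (ℓ+1)):ℤ))
      = Sh ζ ω (m - (a:ℤ) + (b:ℤ))
    have h1 : ((b.succ : Fin (ℓ+1)):ℤ) = (b:ℤ) + 1 := by
      simp [Fin.val_succ]
    have h2 : ((b.castSucc : Fin (ℓ+1)):ℤ) = (b:ℤ) := by simp
    rw [h1, h2, Sh]
    ring_nf
  rw [hsub]
  simp [Toep]


/-- Cofactor linear dependence: any `n+1` vectors in `ℂ^n` satisfy the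
signed-minor linear relation. -/
private lemma dep {n : ℕ} (W : Fin (n+1) → Fin n → ℂ) :
    ∑ j : Fin (n+1), (((-1:ℂ))^(j:ℕ)
      * Matrix.det (Matrix.of (fun a b => W (j.succAbove a) b))) • W j = 0 := by
  funext k
  rw [Finset.sum_apply]
  simp only [Pi.smul_apply, smul_eq_mul, Pi.zero_apply]
  set M : Matrix (Fin (n+1)) (Fin (n+1)) ℂ :=
    Matrix.of (fun j i => Fin.cases (W j k) (fun i' => W j i') i) with hM
  have h0 : M.det = 0 := by
    apply Matrix.det_zero_of_column_eq (i := (0 : Fin (n+1))) (j := k.succ)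
      (Fin.succ_ne_zero k).symm
    intro r
    simp [hM]
  have h1 := Matrix.det_succ_column_zero M
  calc ∑ j : Fin (n+1), ((-1:ℂ))^(j:ℕ)
        * Matrix.det (Matrix.of (fun a b => W (j.succAbove a) b)) * W j k
      = ∑ j : Fin (n+1), ((-1:ℂ))^(j:ℕ) * M j 0 * (M.submatrix j.succAbove Fin.succ).det := by
        refine Finset.sum_congr rfl fun j _ => ?_
        have hs : M.submatrix j.succAbove Fin.succ
            = Matrix.of (fun a b => W (j.succAbove a) b) := by
          ext a b
          simp [hM]
        have hj0 : M j 0 = W j k := by simp [hM]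
        rw [hs, hj0]
        ring
    _ = M.det := h1.symm
    _ = 0 := h0

/-- Determinant with two variable rows atop a fixed block. -/
noncomputable def Dd {N : ℕ} (R : Fin N → Fin (N+2) → ℂ) (x y : Fin (N+2) → ℂ) : ℂ :=
  Matrix.det (Matrix.of (Fin.cons x (Fin.cons y R)))

private lemma cons_one {n : ℕ} {α : Type*} (x y : α) (R : Fin n → α) :
    (Fin.cons x (Fin.cons y R) : Fin (n+2) → α) 1 = y := by
  rw [← Fin.succ_zero_eq_one, Fin.cons_succ, Fin.cons_zero]

private lemma cons_updateRow {N : ℕ} (R : Fin N → Fin (N+2) → ℂ) (x y z : Fin (N+2) → ℂ) :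
    (Matrix.of (Fin.cons x (Fin.cons y R)))
      = (Matrix.of (Fin.cons x (Fin.cons z R))).updateRow 1 y := by
  ext i j
  rw [Matrix.updateRow_apply]
  by_cases h : i = 1
  · subst h
    rw [if_pos rfl]
    show (Fin.cons x (Fin.cons y R) : Fin (N+2) → _) 1 j = y j
    rw [cons_one]
  · rw [if_neg h]
    show (Fin.cons x (Fin.cons y R) : Fin (N+2) → _) i j
      = (Fin.cons x (Fin.cons z R) : Fin (N+2) → _) i j
    induction i using Fin.cases with
    | zero => simp
    | succ i' =>
        induction i' using Fin.cases with
        | zero => exact absurd (Fin.succ_zero_eq_one) h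
        | succ i'' => simp [Fin.cons_succ]

/-- `Dd R x ·` as a linear map. -/
noncomputable def DdL {N : ℕ} (R : Fin N → Fin (N+2) → ℂ) (x : Fin (N+2) → ℂ) :
    (Fin (N+2) → ℂ) →ₗ[ℂ] ℂ where
  toFun y := Dd R x y
  map_add' y z := by
    show Dd R x (y+z) = _
    simp only [Dd]
    rw [cons_updateRow R x (y+z) 0, cons_updateRow R x y 0, cons_updateRow R x z 0,
      Matrix.det_updateRow_add]
  map_smul' c y := by
    show Dd R x (c • y) = c * Dd R x y
    simp only [Dd]
    rw [cons_updateRow R x (c • y) 0, cons_updateRow R x y 0,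
      Matrix.det_updateRow_smul]

private lemma Dd_row_repeat {N : ℕ} (R : Fin N → Fin (N+2) → ℂ) (x : Fin (N+2) → ℂ) (i : Fin N) :
    Dd R x (R i) = 0 := by
  apply Matrix.det_zero_of_row_eq (i := (1 : Fin (N+2))) (j := i.succ.succ)
  · intro h
    rw [← Fin.succ_zero_eq_one] at h
    exact Fin.succ_ne_zero i (Fin.succ_injective _ h).symm
  · show (Fin.cons x (Fin.cons (R i) R) : Fin (N+2) → _) 1
      = (Fin.cons x (Fin.cons (R i) R) : Fin (N+2) → _) i.succ.succ
    rw [cons_one, Fin.cons_succ, Fin.cons_succ]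

private lemma pluecker {N : ℕ} (R : Fin N → Fin (N+2) → ℂ) (a b c d : Fin (N+2) → ℂ) :
    Dd R a b * Dd R c d - Dd R a c * Dd R b d + Dd R a d * Dd R b c = 0 := by
  set W : Fin (N+3) → Fin (N+2) → ℂ := Fin.cons b (Fin.cons c (Fin.cons d R)) with hW
  have hdep := dep W
  have key : ∑ j : Fin (N+3), (((-1:ℂ))^(j:ℕ)
      * Matrix.det (Matrix.of (fun a' b' => W (j.succAbove a') b'))) * Dd R a (W j) = 0 := by
    have := congrArg (DdL R a) hdep
    rw [map_sum, map_zero] at this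
    rw [← this]
    refine Finset.sum_congr rfl fun j _ => ?_
    rw [LinearMap.map_smul, smul_eq_mul]
    rfl
  rw [Fin.sum_univ_succ, Fin.sum_univ_succ, Fin.sum_univ_succ] at key
  -- the tail vanishes
  have htail : ∀ i : Fin N, (((-1:ℂ))^((i.succ.succ.succ : Fin (N+3)):ℕ)
      * Matrix.det (Matrix.of (fun a' b' => W ((i.succ.succ.succ).succAbove a') b')))
      * Dd R a (W i.succ.succ.succ) = 0 := by
    intro i
    have : W i.succ.succ.succ = R i := by
      rw [hW, Fin.cons_succ, Fin.cons_succ, Fin.cons_succ]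
    rw [this, Dd_row_repeat, mul_zero]
  rw [Finset.sum_eq_zero (fun i _ => htail i), add_zero] at key
  -- identify the three minors
  have hm0 : (Matrix.of (fun a' b' => W ((0 : Fin (N+3)).succAbove a') b'))
      = Matrix.of (Fin.cons c (Fin.cons d R)) := by
    ext a' b'
    rw [Matrix.of_apply, Matrix.of_apply, Fin.zero_succAbove, hW, Fin.cons_succ]
  have hm1 : (Matrix.of (fun a' b' => W (((0:Fin (N+2)).succ : Fin (N+3)).succAbove a') b'))
      = Matrix.of (Fin.cons b (Fin.cons d R)) := by
    ext a' b'
    rw [Matrix.of_apply, Matrix.of_apply]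
    induction a' using Fin.cases with
    | zero => rw [Fin.succ_succAbove_zero, hW]; rfl
    | succ a'' =>
        rw [Fin.succ_succAbove_succ, Fin.zero_succAbove, hW, Fin.cons_succ, Fin.cons_succ,
          Fin.cons_succ]
  have hm2 : (Matrix.of (fun a' b' => W (((0:Fin (N+1)).succ.succ : Fin (N+3)).succAbove a') b'))
      = Matrix.of (Fin.cons b (Fin.cons c R)) := by
    ext a' b'
    rw [Matrix.of_apply, Matrix.of_apply]
    induction a' using Fin.cases with
    | zero => rw [Fin.succ_succAbove_zero, hW]; rfl
    | succ a'' =>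
        rw [Fin.succ_succAbove_succ]
        induction a'' using Fin.cases with
        | zero => rw [Fin.succ_succAbove_zero, hW, Fin.cons_succ]; rfl
        | succ a''' =>
            rw [Fin.succ_succAbove_succ, Fin.zero_succAbove, hW]
            simp [Fin.cons_succ]
  rw [hm0, hm1, hm2] at key
  have e0 : W 0 = b := by rw [hW]; rfl
  have e1 : W ((0:Fin (N+2)).succ) = c := by rw [hW, Fin.cons_succ]; rfl
  have e2 : W ((0:Fin (N+1)).succ.succ) = d := by
    rw [hW, Fin.cons_succ, Fin.cons_succ]; rfl
  rw [e0, e1, e2] at key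
  have v0 : (((0 : Fin (N+3)) : ℕ)) = 0 := rfl
  have v1 : ((((0:Fin (N+2)).succ : Fin (N+3)) : ℕ)) = 1 := by simp
  have v2 : ((((0:Fin (N+1)).succ.succ : Fin (N+3)) : ℕ)) = 2 := by simp
  rw [v0, v1, v2] at key
  have hDcd : Matrix.det (Matrix.of (Fin.cons c (Fin.cons d R))) = Dd R c d := rfl
  have hDbd : Matrix.det (Matrix.of (Fin.cons b (Fin.cons d R))) = Dd R b d := rfl
  have hDbc : Matrix.det (Matrix.of (Fin.cons b (Fin.cons c R))) = Dd R b c := rfl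
  rw [hDcd, hDbd, hDbc] at key
  linear_combination key
private lemma cons_updateRow0 {n : ℕ} (T : Fin n → Fin (n+1) → ℂ) (v w : Fin (n+1) → ℂ) :
    (Matrix.of (Fin.cons v T) : Matrix (Fin (n+1)) (Fin (n+1)) ℂ)
      = (Matrix.of (Fin.cons w T)).updateRow 0 v := by
  ext i j
  rw [Matrix.updateRow_apply]
  induction i using Fin.cases with
  | zero => simp
  | succ i' => rw [if_neg (Fin.succ_ne_zero i')]; simp [Fin.cons_succ]

private lemma succAbove_one_zero {n : ℕ} : (1 : Fin (n+2)).succAbove 0 = 0 := by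
  rw [← Fin.succ_zero_eq_one]
  exact Fin.succ_succAbove_zero 0

private lemma succAbove_one_succ {n : ℕ} (a : Fin n) :
    (1 : Fin (n+2)).succAbove a.succ = a.succ.succ := by
  rw [← Fin.succ_zero_eq_one, Fin.succ_succAbove_succ, Fin.zero_succAbove]

theorem stmt13 (ω : ℤ → ℂ) (ξ η : ℂ) (m : ℤ) (ℓ : ℕ) :
    (ξ - η) * Toep (m + 1) (ℓ + 1) ω * Toep m ℓ (Sh ξ (Sh η ω))
      = Toep m ℓ (Sh ξ ω) * Toep (m + 1) (ℓ + 1) (Sh η ω)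
        - Toep (m + 1) (ℓ + 1) (Sh ξ ω) * Toep m ℓ (Sh η ω) := by
  set R : Fin ℓ → Fin (ℓ+2) → ℂ := fun a b => ω (m - (a:ℤ) + (b:ℤ)) with hR
  set p : Fin (ℓ+2) → ℂ := fun b => ξ^(b:ℕ) with hp
  set q : Fin (ℓ+2) → ℂ := fun b => η^(b:ℕ) with hq
  set cc : Fin (ℓ+2) → ℂ := fun b => ω (m + 1 + (b:ℤ)) with hcc
  set ee : Fin (ℓ+2) → ℂ := fun b => (if b = Fin.last (ℓ+1) then (1:ℂ) else 0) with hee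
  -- the generic "power-row" bordered matrix for parameter ζ and sequence ω₀ over size ℓ+1
  -- h3 : Dd R p cc = Toep (m+1) (ℓ+1) (Sh ξ ω)
  have hbig : ∀ ζ : ℂ, Matrix.of (Fin.cons (fun b : Fin (ℓ+2) => ζ^(b:ℕ)) (Fin.cons cc R))
      = Matrix.of (Fin.cons (fun b : Fin (ℓ+1+1) => ζ^(b:ℕ))
        (fun (a : Fin (ℓ+1)) (b : Fin (ℓ+1+1)) => ω ((m+1) - (a:ℤ) + (b:ℤ)))) := by
    intro ζ
    ext i j
    induction i using Fin.cases with
    | zero => simp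
    | succ a =>
        rw [Matrix.of_apply, Matrix.of_apply, Fin.cons_succ, Fin.cons_succ]
        induction a using Fin.cases with
        | zero =>
            rw [Fin.cons_zero, hcc]
            norm_num
        | succ a' =>
            rw [Fin.cons_succ, hR]
            beta_reduce
            congr 1
            push_cast [Fin.val_succ]
            ring
  have h3 : Dd R p cc = Toep (m+1) (ℓ+1) (Sh ξ ω) := by
    rw [Dd, hp, hbig ξ, det_sh (m+1) (ℓ+1) ξ ω]
  have h4 : Dd R q cc = Toep (m+1) (ℓ+1) (Sh η ω) := by
    rw [Dd, hq, hbig η, det_sh (m+1) (ℓ+1) η ω]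
  -- expansion along the `ee` row
  have hee_row : ∀ x : Fin (ℓ+2) → ℂ, ∀ j',
      (Matrix.of (Fin.cons x (Fin.cons ee R)) : Matrix (Fin (ℓ+2)) (Fin (ℓ+2)) ℂ) 1 j'
        = if j' = Fin.last (ℓ+1) then 1 else 0 := by
    intro x j'
    show (Fin.cons x (Fin.cons ee R) : Fin (ℓ+2) → _) 1 j' = _
    rw [cons_one, hee]
  have hsign : ((-1:ℂ))^(((1 : Fin (ℓ+2)):ℕ) + ((Fin.last (ℓ+1)):ℕ)) = (-1)^ℓ := by
    rw [Fin.val_one, Fin.val_last]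
    rw [show 1 + (ℓ+1) = ℓ+2 by omega, pow_succ, pow_succ]
    ring
  have hexp_e : ∀ x : Fin (ℓ+2) → ℂ, Dd R x ee = (-1)^ℓ
      * ((Matrix.of (Fin.cons x (Fin.cons ee R))).submatrix
          ((1 : Fin (ℓ+2)).succAbove) ((Fin.last (ℓ+1)).succAbove)).det := by
    intro x
    rw [Dd, det_row_single _ 1 (Fin.last (ℓ+1)) (hee_row x), hsign]
  have hsub_e : ∀ x : Fin (ℓ+2) → ℂ,
      (Matrix.of (Fin.cons x (Fin.cons ee R))).submatrix
          ((1 : Fin (ℓ+2)).succAbove) ((Fin.last (ℓ+1)).succAbove)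
        = Matrix.of (Fin.cons (fun b : Fin (ℓ+1) => x b.castSucc)
            (fun (a : Fin ℓ) (b : Fin (ℓ+1)) => ω (m - (a:ℤ) + (b:ℤ)))) := by
    intro x
    ext a b
    rw [Matrix.submatrix_apply, Fin.succAbove_last]
    induction a using Fin.cases with
    | zero =>
        rw [succAbove_one_zero]
        show (Fin.cons x (Fin.cons ee R) : Fin (ℓ+2) → _) 0 b.castSucc = _
        rw [Fin.cons_zero, Matrix.of_apply, Fin.cons_zero]
    | succ a' =>
        rw [succAbove_one_succ]
        show (Fin.cons x (Fin.cons ee R) : Fin (ℓ+2) → _) a'.succ.succ b.castSucc = _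
        rw [Fin.cons_succ, Fin.cons_succ, Matrix.of_apply, Fin.cons_succ, hR]
        simp only [Fin.coe_castSucc]
  -- h2 : Dd R cc ee
  have h2 : Dd R cc ee = (-1)^ℓ * Toep (m+1) (ℓ+1) ω := by
    rw [hexp_e cc, hsub_e cc]
    congr 1
    rw [Toep]
    congr 1
    ext a b
    rw [Matrix.of_apply]
    induction a using Fin.cases with
    | zero =>
        rw [Fin.cons_zero, hcc]
        rw [Matrix.of_apply]
        beta_reduce
        congr 1
        push_cast [Fin.coe_castSucc, Fin.val_zero]
        ring
    | succ a' =>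
        rw [Fin.cons_succ, Matrix.of_apply]
        beta_reduce
        congr 1
        push_cast [Fin.val_succ]
        ring
  -- h5, h6
  have hpow : ∀ ζ : ℂ, (fun b : Fin (ℓ+1) => (fun v : Fin (ℓ+2) => ζ^(v:ℕ)) b.castSucc)
      = fun b : Fin (ℓ+1) => ζ^(b:ℕ) := by
    intro ζ
    funext b
    simp
  have h5 : Dd R p ee = (-1)^ℓ * Toep m ℓ (Sh ξ ω) := by
    rw [hexp_e p, hsub_e p, hp, hpow ξ, det_sh m ℓ ξ ω]
  have h6 : Dd R q ee = (-1)^ℓ * Toep m ℓ (Sh η ω) := by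
    rw [hexp_e q, hsub_e q, hq, hpow η, det_sh m ℓ η ω]
  -- h1 : Dd R p q
  have h1 : Dd R p q = -((ξ - η) * Toep m ℓ (Sh ξ (Sh η ω))) := by
    rw [Dd]
    set M : Matrix (Fin (ℓ+2)) (Fin (ℓ+2)) ℂ := Matrix.of (Fin.cons p (Fin.cons q R)) with hM
    rw [det_colop η M]
    set A : Matrix (Fin (ℓ+2)) (Fin (ℓ+2)) ℂ := Matrix.of fun a b =>
        Fin.cases (M a 0) (fun b' => M a b'.succ - η * M a b'.castSucc) b with hA
    have hrow : ∀ j', A 1 j' = if j' = 0 then 1 else 0 := by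
      intro j'
      have hM1 : ∀ v : Fin (ℓ+2), M 1 v = η^(v:ℕ) := by
        intro v
        show (Fin.cons p (Fin.cons q R) : Fin (ℓ+2) → _) 1 v = _
        rw [cons_one, hq]
      induction j' using Fin.cases with
      | zero =>
          rw [if_pos rfl, hA, Matrix.of_apply]
          show M 1 0 = 1
          rw [hM1]
          simp
      | succ b' =>
          rw [if_neg (Fin.succ_ne_zero b'), hA, Matrix.of_apply, Fin.cases_succ, hM1, hM1,
            Fin.val_succ, Fin.coe_castSucc, pow_succ]
          ring
    rw [det_row_single A 1 0 hrow]
    have hsub : A.submatrix ((1 : Fin (ℓ+2)).succAbove) ((0 : Fin (ℓ+2)).succAbove)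
        = Matrix.of (Fin.cons ((ξ - η) • fun b : Fin (ℓ+1) => ξ^(b:ℕ))
            (fun (a : Fin ℓ) (b : Fin (ℓ+1)) => (Sh η ω) (m - (a:ℤ) + (b:ℤ)))) := by
      ext a b
      rw [Matrix.submatrix_apply, Fin.succAbove_zero, hA, Matrix.of_apply, Fin.cases_succ]
      induction a using Fin.cases with
      | zero =>
          rw [succAbove_one_zero]
          have hM0 : ∀ v : Fin (ℓ+2), M 0 v = ξ^(v:ℕ) := by
            intro v
            show (Fin.cons p (Fin.cons q R) : Fin (ℓ+2) → _) 0 v = _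
            rw [Fin.cons_zero, hp]
          rw [hM0, hM0, Matrix.of_apply, Fin.cons_zero, Pi.smul_apply, smul_eq_mul,
            Fin.val_succ, Fin.coe_castSucc, pow_succ]
          ring
      | succ a' =>
          rw [succAbove_one_succ]
          have hMs : ∀ v : Fin (ℓ+2), M a'.succ.succ v = ω (m - (a':ℤ) + (v:ℤ)) := by
            intro v
            show (Fin.cons p (Fin.cons q R) : Fin (ℓ+2) → _) a'.succ.succ v = _
            rw [Fin.cons_succ, Fin.cons_succ, hR]
          rw [hMs, hMs, Matrix.of_apply, Fin.cons_succ]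
          beta_reduce
          rw [Sh]
          have e1 : m - ((a' : ℕ):ℤ) + ((((b.succ : Fin (ℓ+2)) : ℕ)):ℤ)
              = m - ((a' : ℕ):ℤ) + (((b : ℕ)):ℤ) + 1 := by
            push_cast [Fin.val_succ]
            ring
          have e2 : ((((b.castSucc : Fin (ℓ+2)) : ℕ)):ℤ) = (((b : ℕ)):ℤ) := by
            simp
          rw [e1, e2]
    rw [hsub, cons_updateRow0 _ _ (fun b : Fin (ℓ+1) => ξ^(b:ℕ)), Matrix.det_updateRow_smul,
      ← cons_updateRow0, det_sh m ℓ ξ (Sh η ω)]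
    simp only [Fin.val_one, Fin.val_zero, pow_one, smul_eq_mul]
    ring
  have P := pluecker R p q cc ee
  rw [h1, h2, h3, h4, h5, h6] at P
  have hc : ((-1:ℂ))^ℓ * ((-1:ℂ))^ℓ = 1 := by
    rw [← pow_add]
    exact Even.neg_one_pow ⟨ℓ, rfl⟩
  linear_combination (-((-1:ℂ)^ℓ)) * P
    + (-((ξ-η) * Toep (m + 1) (ℓ + 1) ω * Toep m ℓ (Sh ξ (Sh η ω))
        + Toep (m + 1) (ℓ + 1) (Sh ξ ω) * Toep m ℓ (Sh η ω)
        - Toep m ℓ (Sh ξ ω) * Toep (m + 1) (ℓ + 1) (Sh η ω))) * hc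
end

section
/- For every sequence ω : ℤ → ℂ, all ξ, η ∈ ℂ, every m ∈ ℤ and every integer ℓ ≥ 1, the Toeplitz determinants satisfy: A(m, ℓ, S_ξω)·A(m, ℓ, S_ηω) = A(m, ℓ, ω)·A(m, ℓ, S_ξS_ηω) + A(m+1, ℓ+1, ω)·A(m−1, ℓ−1, S_ξS_ηω). -/
/-!
Let `T` be the `(ℓ+1)×(ℓ+1)` Toeplitz matrix `(ω(m+1-a+b))` and `L_ζ = 1 - ζ J`, with `J` the
upper shift, so that `det L_ζ = 1`. In `N = L_ξ T L_η` each row loses `ξ` times the next one and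
each column `η` times the previous one, which turns the entries `ω(k)` of `T` into
`(S_ξ S_η ω)(k-2)` away from the last row and the first column. Hence the four `ℓ×ℓ` corner minors
of `N` are, up to unitriangular factors, the Toeplitz matrices of `ω`, `S_ξ ω`, `S_η ω` and
`S_ξ S_η ω` at `m`, its central minor is that of `S_ξ S_η ω` at `m-1`, and the identity is the
Desnanot–Jacobi identity for `N`.
-/

namespace Matrix

variable {R : Type*} [CommRing R]

theorem det_updateCol_single_self {n : ℕ} (A : Matrix (Fin (n + 1)) (Fin (n + 1)) R)
    (j : Fin (n + 1)) :
    (A.updateCol j (Pi.single j 1)).det = (A.submatrix j.succAbove j.succAbove).det := by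
  rw [det_succ_column _ j, Fintype.sum_eq_single j]
  · simp [← two_mul, pow_mul]
  · intro i hi
    simp [Pi.single_eq_of_ne hi]

theorem det_updateCol_single_zero_last {n : ℕ} (M : Matrix (Fin (n + 2)) (Fin (n + 2)) R) :
    ((M.updateCol 0 (Pi.single 0 1)).updateCol (Fin.last _) (Pi.single (Fin.last _) 1)).det =
      (M.submatrix (fun k : Fin n => k.succ.castSucc) (fun k => k.succ.castSucc)).det := by
  have hsub : (M.updateCol 0 (Pi.single 0 1)).submatrix Fin.castSucc Fin.castSucc =
      (M.submatrix Fin.castSucc Fin.castSucc).updateCol 0 (Pi.single 0 1) := by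
    ext a b
    simp [updateCol_apply, Pi.single_apply]
  rw [det_updateCol_single_self, Fin.succAbove_last, hsub, det_updateCol_single_self]
  rfl

theorem det_one_updateCol_updateCol {n : Type*} [Fintype n] [DecidableEq n] {i j : n}
    (hij : i ≠ j) (u v : n → R) :
    (((1 : Matrix n n R).updateCol i u).updateCol j v).det = u i * v j - u j * v i := by
  let X : Matrix n (Fin 2) R := (of ![u - Pi.single i 1, v - Pi.single j 1])ᵀ
  let Y : Matrix (Fin 2) n R := of ![Pi.single i 1, Pi.single j 1]
  have hXY : ((1 : Matrix n n R).updateCol i u).updateCol j v = 1 + X * Y := by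
    ext a b
    simp [X, Y, mul_apply, Fin.sum_univ_two, updateCol_apply, one_apply, Pi.single_apply]
    split_ifs <;> simp_all
  rw [hXY, det_one_add_mul_comm, det_fin_two]
  simp [X, Y, hij, hij.symm]
  ring

section CornerMinor

variable {n : ℕ} (M : Matrix (Fin (n + 2)) (Fin (n + 2)) R)

theorem det_mul_adjugate_corner_minor :
    M.det * (M.adjugate 0 0 * M.adjugate (Fin.last _) (Fin.last _)
      - M.adjugate (Fin.last _) 0 * M.adjugate 0 (Fin.last _)) =
      M.det * (M.det *
        (M.submatrix (fun k : Fin n => k.succ.castSucc) (fun k => k.succ.castSucc)).det) := by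
  have hne : (0 : Fin (n + 2)) ≠ Fin.last _ := Fin.last_pos.ne
  set C := ((1 : Matrix (Fin (n + 2)) (Fin (n + 2)) R).updateCol 0
    (fun i => M.adjugate i 0)).updateCol (Fin.last _) (fun i => M.adjugate i (Fin.last _))
  have hMC : M * C = (M.updateCol 0 (M.det • Pi.single 0 1)).updateCol (Fin.last _)
      (M.det • Pi.single (Fin.last _) 1) := by
    have hcol (j : Fin (n + 2)) : M *ᵥ (fun i => M.adjugate i j) = M.det • Pi.single j 1 := by
      ext i
      simp [mulVec, dotProduct, ← mul_apply, mul_adjugate, one_apply, Pi.single_apply]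
    rw [mul_updateCol, mul_updateCol, mul_one, hcol, hcol]
  calc _ = (M * C).det := by rw [det_mul, det_one_updateCol_updateCol hne]
    _ = _ := by
      rw [hMC, det_updateCol_smul, updateCol_comm _ hne, det_updateCol_smul,
        updateCol_comm _ hne.symm, det_updateCol_single_zero_last]

/-- The factor `det M` is cancelled for the generic matrix, whose determinant is not a zero
divisor, and the identity is then specialised to `M`. -/
theorem adjugate_corner_minor :
    M.adjugate 0 0 * M.adjugate (Fin.last _) (Fin.last _)
      - M.adjugate (Fin.last _) 0 * M.adjugate 0 (Fin.last _) =
      M.det * (M.submatrix (fun k : Fin n => k.succ.castSucc) (fun k => k.succ.castSucc)).det := by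
  let X := mvPolynomialX (Fin (n + 2)) (Fin (n + 2)) ℤ
  let f := (MvPolynomial.aeval (R := ℤ) fun p : Fin (n + 2) × Fin (n + 2) => M p.1 p.2).toRingHom
  have hX := mul_left_cancel₀ (det_mvPolynomialX_ne_zero _ ℤ) (det_mul_adjugate_corner_minor X)
  have hfX : f.mapMatrix X = M := mvPolynomialX_mapMatrix_aeval ℤ M
  have hadj (i j) : f (X.adjugate i j) = M.adjugate i j := by
    rw [← hfX, ← RingHom.map_adjugate]
    rfl
  have := congrArg f hX
  simp only [map_sub, map_mul, RingHom.map_det, hadj] at this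
  simpa [← hfX, ← submatrix_map] using this

theorem desnanot_jacobi :
    M.det * (M.submatrix (fun k : Fin n => k.succ.castSucc) (fun k => k.succ.castSucc)).det =
      (M.submatrix Fin.succ Fin.succ).det * (M.submatrix Fin.castSucc Fin.castSucc).det
        - (M.submatrix Fin.succ Fin.castSucc).det * (M.submatrix Fin.castSucc Fin.succ).det := by
  rw [← adjugate_corner_minor]
  simp only [adjugate_fin_succ_eq_det_submatrix, Fin.succAbove_zero, Fin.succAbove_last]
  ring_nf
  simp

end CornerMinor

end Matrix

open Matrix

section DifferenceMatrix

def shiftMatrix (R : Type*) [Zero R] [One R] (p : ℕ) : Matrix (Fin p) (Fin p) R :=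
  of fun a b => if (a : ℕ) + 1 = b then 1 else 0

variable {R : Type*} [CommRing R]

theorem shiftMatrix_mul_apply {p : ℕ} (X : Matrix (Fin p) (Fin p) R) (a b : Fin p) :
    (shiftMatrix R p * X) a b = if h : (a : ℕ) + 1 < p then X ⟨a + 1, h⟩ b else 0 := by
  rw [mul_apply]
  split_ifs with h
  · rw [Fintype.sum_eq_single ⟨a + 1, h⟩]
    · simp [shiftMatrix]
    · intro c hc
      simp [shiftMatrix, Fin.ext_iff] at hc ⊢
      omega
  · refine Fintype.sum_eq_zero _ fun c => ?_
    have : (a : ℕ) + 1 ≠ c := by omega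
    simp [shiftMatrix, this]

theorem mul_shiftMatrix_apply {p : ℕ} (X : Matrix (Fin p) (Fin p) R) (a b : Fin p) :
    (X * shiftMatrix R p) a b = if h : 0 < (b : ℕ) then X a ⟨b - 1, by omega⟩ else 0 := by
  rw [mul_apply]
  split_ifs with h
  · rw [Fintype.sum_eq_single ⟨b - 1, by omega⟩]
    · simp [shiftMatrix, Nat.sub_add_cancel h]
    · intro c hc
      simp [shiftMatrix, Fin.ext_iff] at hc ⊢
      omega
  · refine Fintype.sum_eq_zero _ fun c => ?_
    have : (c : ℕ) + 1 ≠ b := by omega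
    simp [shiftMatrix, this]

def differenceMatrix (ζ : R) (p : ℕ) : Matrix (Fin p) (Fin p) R :=
  1 - ζ • shiftMatrix R p

theorem differenceMatrix_mul_apply (ζ : R) {p : ℕ} (X : Matrix (Fin p) (Fin p) R)
    (a b : Fin p) :
    (differenceMatrix ζ p * X) a b =
      X a b - ζ * if h : (a : ℕ) + 1 < p then X ⟨a + 1, h⟩ b else 0 := by
  rw [differenceMatrix, sub_mul, smul_mul_assoc, one_mul, Matrix.sub_apply, Matrix.smul_apply,
    shiftMatrix_mul_apply, smul_eq_mul]

theorem mul_differenceMatrix_apply (ζ : R) {p : ℕ} (X : Matrix (Fin p) (Fin p) R)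
    (a b : Fin p) :
    (X * differenceMatrix ζ p) a b =
      X a b - ζ * if h : 0 < (b : ℕ) then X a ⟨b - 1, by omega⟩ else 0 := by
  rw [differenceMatrix, mul_sub, mul_smul_comm, mul_one, Matrix.sub_apply, Matrix.smul_apply,
    mul_shiftMatrix_apply, smul_eq_mul]

theorem det_differenceMatrix (ζ : R) (p : ℕ) : (differenceMatrix ζ p).det = 1 := by
  rw [det_of_isUpperTriangular]
  · simp [differenceMatrix, shiftMatrix]
  · intro a b (hba : b < a)
    have : (a : ℕ) + 1 ≠ b := by omega
    simp [differenceMatrix, shiftMatrix, this, one_apply_ne hba.ne']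

end DifferenceMatrix

section Toeplitz

def toeplitz {R : Type*} (m : ℤ) (p : ℕ) (ω : ℤ → R) : Matrix (Fin p) (Fin p) R :=
  of fun a b => ω (m - a + b)

theorem Toep_eq_det_toeplitz (m : ℤ) (p : ℕ) (ω : ℤ → ℂ) :
    Toep m p ω = (toeplitz m p ω).det :=
  rfl

variable (ξ η : ℂ) (m : ℤ) (n : ℕ) (ω : ℤ → ℂ)

noncomputable def condensationMatrix : Matrix (Fin (n + 2)) (Fin (n + 2)) ℂ :=
  differenceMatrix ξ (n + 2) * (toeplitz (m + 1) (n + 2) ω * differenceMatrix η (n + 2))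

theorem det_condensationMatrix :
    (condensationMatrix ξ η m n ω).det = Toep (m + 1) (n + 2) ω := by
  rw [condensationMatrix, det_mul, det_mul, det_differenceMatrix, det_differenceMatrix, one_mul,
    mul_one, Toep_eq_det_toeplitz]

theorem condensationMatrix_submatrix_succ_succ :
    (condensationMatrix ξ η m n ω).submatrix Fin.succ Fin.succ =
      differenceMatrix ξ (n + 1) * toeplitz m (n + 1) (Sh η ω) := by
  ext a b
  simp only [condensationMatrix, submatrix_apply, differenceMatrix_mul_apply,
    mul_differenceMatrix_apply, toeplitz, of_apply, Sh, Fin.val_succ, Nat.add_sub_cancel]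
  split_ifs <;> first | omega | (push_cast; ring_nf)

theorem condensationMatrix_submatrix_castSucc_castSucc :
    (condensationMatrix ξ η m n ω).submatrix Fin.castSucc Fin.castSucc =
      toeplitz m (n + 1) (Sh ξ ω) * differenceMatrix η (n + 1) := by
  ext a b
  simp only [condensationMatrix, submatrix_apply, differenceMatrix_mul_apply,
    mul_differenceMatrix_apply, toeplitz, of_apply, Sh, Fin.val_castSucc]
  split_ifs <;> first | omega | (push_cast; ring_nf)

theorem condensationMatrix_submatrix_succ_castSucc :
    (condensationMatrix ξ η m n ω).submatrix Fin.succ Fin.castSucc =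
      differenceMatrix ξ (n + 1) * (toeplitz m (n + 1) ω * differenceMatrix η (n + 1)) := by
  ext a b
  simp only [condensationMatrix, submatrix_apply, differenceMatrix_mul_apply,
    mul_differenceMatrix_apply, toeplitz, of_apply, Fin.val_succ, Fin.val_castSucc]
  split_ifs <;> first | omega | (push_cast; ring_nf)

theorem condensationMatrix_submatrix_castSucc_succ :
    (condensationMatrix ξ η m n ω).submatrix Fin.castSucc Fin.succ =
      toeplitz m (n + 1) (Sh ξ (Sh η ω)) := by
  ext a b
  simp only [condensationMatrix, submatrix_apply, differenceMatrix_mul_apply,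
    mul_differenceMatrix_apply, toeplitz, of_apply, Sh, Fin.val_succ, Fin.val_castSucc,
    Nat.add_sub_cancel]
  split_ifs <;> first | omega | (push_cast; ring_nf)

theorem condensationMatrix_submatrix_inner :
    (condensationMatrix ξ η m n ω).submatrix (fun k : Fin n => k.succ.castSucc)
      (fun k => k.succ.castSucc) = toeplitz (m - 1) n (Sh ξ (Sh η ω)) := by
  ext a b
  simp only [condensationMatrix, submatrix_apply, differenceMatrix_mul_apply,
    mul_differenceMatrix_apply, toeplitz, of_apply, Sh, Fin.val_succ, Fin.val_castSucc,
    Nat.add_sub_cancel]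
  split_ifs <;> first | omega | (push_cast; ring_nf)

end Toeplitz

theorem stmt14 (ω : ℤ → ℂ) (ξ η : ℂ) (m : ℤ) (ℓ : ℕ) (hℓ : 1 ≤ ℓ) :
    Toep m ℓ (Sh ξ ω) * Toep m ℓ (Sh η ω)
      = Toep m ℓ ω * Toep m ℓ (Sh ξ (Sh η ω))
        + Toep (m + 1) (ℓ + 1) ω * Toep (m - 1) (ℓ - 1) (Sh ξ (Sh η ω)) := by
  obtain ⟨n, rfl⟩ : ∃ n, ℓ = n + 1 := ⟨ℓ - 1, by omega⟩
  have h := desnanot_jacobi (condensationMatrix ξ η m n ω)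
  rw [det_condensationMatrix, condensationMatrix_submatrix_inner,
    condensationMatrix_submatrix_succ_succ, condensationMatrix_submatrix_castSucc_castSucc,
    condensationMatrix_submatrix_succ_castSucc, condensationMatrix_submatrix_castSucc_succ] at h
  simp only [det_mul, det_differenceMatrix, one_mul, mul_one, ← Toep_eq_det_toeplitz] at h
  rw [Nat.add_sub_cancel]
  linear_combination -h
end

section
/- Let α₁, α₂, α₃ ∈ ℝ be pairwise distinct and let L, R ∈ ℝ satisfy L − αᵢ > 0 and R − αᵢ > 0 for i = 1, 2, 3; let δ₊, δ₋ ∈ ℝ. Set Γ₁ = α₂−α₃, Γ₂ = α₃−α₁, Γ₃ = α₁−α₂, and for j = 1, 2 set p_j = (1/2)·[ln(L−α_{j+1}) + ln(R−α_{j+1}) − ln(L−α_{j+2}) − ln(R−α_{j+2})] and q_j = (1/2)·[ln(L−α_{j+1}) − ln(R−α_{j+1}) − ln(L−α_{j+2}) + ln(R−α_{j+2})], indices of α taken modulo 3. Define u : ℤ² → ℝ by u(n₁,n₂) = exp(δ₊ − n₁p₁ − n₂p₂)/cosh(δ₋ − n₁q₁ − n₂q₂). If for every n ∈ ℤ² and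 i = 1, 2, 3 the differences u(n) − u(n+gᵢ) and u(n) − u(n−gᵢ) are nonzero, then u satisfies the triangular field equations (with ℝ in place of ℂ) with constants Γ₁, Γ₂, Γ₃: this is the one-soliton solution on the triangular lattice. -/
/-- The three triangular-lattice vectors in `ℤ²`. -/
def gTL : Fin 3 → ℤ × ℤ := ![(1, 0), (0, 1), (-1, -1)]

/-- `u : ℤ² → ℝ` satisfies the (real) triangular field equations with constants `Γ`. -/
def TriangularEqsR (Γ : Fin 3 → ℝ) (u : ℤ × ℤ → ℝ) : Prop :=
  ∀ m : ℤ × ℤ,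
    (∀ i : Fin 3, u m - u (m + gTL i) ≠ 0 ∧ u m - u (m - gTL i) ≠ 0) ∧
    ∑ i : Fin 3, Γ i * (1 / (u m - u (m + gTL i)) + 1 / (u m - u (m - gTL i))) = 0

/-! Write `u = 1 / (X + Y)` with `X = exp (Q - P) / 2` and `Y = exp (-(Q + P)) / 2`, where
`u = exp P / cosh Q`. With `a = L - α` and `b = R - α`, both `X` and `Y` are multiplicative
characters of `ℤ²`: a step along `gᵢ` multiplies `X` by `b (i+1) / b (i+2)` and `Y` by
`a (i+1) / a (i+2)`. Because `a j - b j = L - R` does not depend on `j`, the difference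
`1/u(m ± gᵢ) - 1/u(m)` is a multiple of `Γᵢ`, and the two terms of direction `i` in the field
equation add up to `(X + Y) * (f (i+2) - f (i+1))` for a single `f : Fin 3 → ℝ`; these cancel
cyclically. -/

open Real

lemma exp_div_cosh (P Q : ℝ) : exp P / cosh Q = 1 / (exp (Q - P) / 2 + exp (-(Q + P)) / 2) := by
  rw [cosh_eq, exp_sub, exp_neg, exp_neg, exp_add]
  field_simp

noncomputable def latticeChar (κ : Fin 3 → ℝ) (n : ℤ × ℤ) : ℝ :=
  exp (n.1 * (log (κ 1) - log (κ 2)) + n.2 * (log (κ 2) - log (κ 0)))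

lemma latticeChar_pos (κ : Fin 3 → ℝ) (n : ℤ × ℤ) : 0 < latticeChar κ n := exp_pos _

lemma latticeChar_add_gTL {κ : Fin 3 → ℝ} (hκ : ∀ j, 0 < κ j) (n : ℤ × ℤ)
    (i : Fin 3) :
    latticeChar κ (n + gTL i) = latticeChar κ n * (κ (i + 1) / κ (i + 2)) := by
  have hlog : ∀ j k, κ j / κ k = exp (log (κ j) - log (κ k)) := fun j k => by
    rw [exp_sub, exp_log (hκ j), exp_log (hκ k)]
  simp only [latticeChar, hlog, ← exp_add]
  congr 1
  fin_cases i <;> simp [gTL] <;> ring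

lemma latticeChar_sub_gTL {κ : Fin 3 → ℝ} (hκ : ∀ j, 0 < κ j) (n : ℤ × ℤ)
    (i : Fin 3) :
    latticeChar κ (n - gTL i) = latticeChar κ n * (κ (i + 2) / κ (i + 1)) := by
  have h := latticeChar_add_gTL hκ (n - gTL i) i
  rw [sub_add_cancel] at h
  rw [h, mul_assoc, div_mul_div_comm, mul_comm (κ (i + 1)), div_self, mul_one]
  exact (mul_pos (hκ _) (hκ _)).ne'

lemma sub_mul_one_div_one_div_sub_one_div {X Y a b a' b' c : ℝ} (hX : 0 < X) (hY : 0 < Y)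
    (ha : 0 < a) (hb : 0 < b) (ha' : 0 < a') (hb' : 0 < b') (hab : a - b = c) (hab' : a' - b' = c)
    (hne : 1 / (X + Y) - 1 / (X * (b / b') + Y * (a / a')) ≠ 0) :
    (b' - b) * (1 / (1 / (X + Y) - 1 / (X * (b / b') + Y * (a / a'))))
      = -(X + Y) * (b + c * Y * b' / (X * a' + Y * b')) := by
  obtain rfl : a = b + c := by linarith
  obtain rfl : a' = b' + c := by linarith
  have hw : X * (b / b') + Y * ((b + c) / (b' + c)) - (X + Y)
      = (b - b') * (X * (b' + c) + Y * b') / (b' * (b' + c)) := by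
    field_simp; ring
  have hbb' : b - b' ≠ 0 := by
    intro h
    rw [sub_eq_zero.mp h, div_self hb'.ne', div_self ha'.ne', mul_one, mul_one, sub_self] at hne
    exact hne rfl
  rw [div_sub_div _ _ (by positivity) (by positivity), one_div_div, one_mul, mul_one, hw]
  field_simp
  ring

theorem triangularEqsR_of_eq_one_div_latticeChar {a b : Fin 3 → ℝ} {c C D : ℝ}
    (ha : ∀ j, 0 < a j) (hb : ∀ j, 0 < b j) (hab : ∀ j, a j - b j = c)
    (hC : 0 < C) (hD : 0 < D) {u : ℤ × ℤ → ℝ}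
    (hu : ∀ n, u n = 1 / (C * latticeChar b n + D * latticeChar a n))
    (hne : ∀ n i, u n - u (n + gTL i) ≠ 0 ∧ u n - u (n - gTL i) ≠ 0) :
    TriangularEqsR (fun i => b (i + 2) - b (i + 1)) u := by
  intro m
  refine ⟨hne m, ?_⟩
  beta_reduce
  set X := C * latticeChar b m
  set Y := D * latticeChar a m
  have hX : 0 < X := mul_pos hC (latticeChar_pos _ _)
  have hY : 0 < Y := mul_pos hD (latticeChar_pos _ _)
  set f : Fin 3 → ℝ := fun j => b j - c * Y * b j / (X * a j + Y * b j)
  have hterm : ∀ i : Fin 3,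
      (b (i + 2) - b (i + 1)) * (1 / (u m - u (m + gTL i)) + 1 / (u m - u (m - gTL i)))
        = (X + Y) * (f (i + 2) - f (i + 1)) := by
    intro i
    have hu0 : u m = 1 / (X + Y) := hu m
    have huAdd : u (m + gTL i)
        = 1 / (X * (b (i + 1) / b (i + 2)) + Y * (a (i + 1) / a (i + 2))) := by
      rw [hu, latticeChar_add_gTL hb, latticeChar_add_gTL ha]; ring
    have huSub : u (m - gTL i)
        = 1 / (X * (b (i + 2) / b (i + 1)) + Y * (a (i + 2) / a (i + 1))) := by
      rw [hu, latticeChar_sub_gTL hb, latticeChar_sub_gTL ha]; ring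
    obtain ⟨hneAdd, hneSub⟩ := hne m i
    rw [hu0, huAdd] at hneAdd
    rw [hu0, huSub] at hneSub
    rw [mul_add, hu0, huAdd, huSub,
      sub_mul_one_div_one_div_sub_one_div hX hY (ha _) (hb _) (ha _) (hb _) (hab _) (hab _) hneAdd,
      ← neg_sub (b (i + 1)), neg_mul (b (i + 1) - b (i + 2)),
      sub_mul_one_div_one_div_sub_one_div hX hY (ha _) (hb _) (ha _) (hb _) (hab _) (hab _) hneSub]
    ring
  rw [Finset.sum_congr rfl fun i _ => hterm i, ← Finset.mul_sum, Finset.sum_sub_distrib,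
    show ∑ i, f (i + 2) = ∑ i, f i from Equiv.sum_comp (Equiv.addRight 2) f,
    show ∑ i, f (i + 1) = ∑ i, f i from Equiv.sum_comp (Equiv.addRight 1) f, sub_self, mul_zero]

theorem stmt19_general (α : Fin 3 → ℝ)
    (L R : ℝ) (hL : ∀ i : Fin 3, 0 < L - α i) (hR : ∀ i : Fin 3, 0 < R - α i)
    (dp dm : ℝ) (p1 p2 q1 q2 : ℝ)
    (hp1 : p1 = (Real.log (L - α 1) + Real.log (R - α 1)
      - Real.log (L - α 2) - Real.log (R - α 2)) / 2)
    (hq1 : q1 = (Real.log (L - α 1) - Real.log (R - α 1)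
      - Real.log (L - α 2) + Real.log (R - α 2)) / 2)
    (hp2 : p2 = (Real.log (L - α 2) + Real.log (R - α 2)
      - Real.log (L - α 0) - Real.log (R - α 0)) / 2)
    (hq2 : q2 = (Real.log (L - α 2) - Real.log (R - α 2)
      - Real.log (L - α 0) + Real.log (R - α 0)) / 2)
    (u : ℤ × ℤ → ℝ)
    (hu : ∀ n : ℤ × ℤ,
      u n = Real.exp (dp - (n.1 : ℝ) * p1 - (n.2 : ℝ) * p2)
        / Real.cosh (dm - (n.1 : ℝ) * q1 - (n.2 : ℝ) * q2))
    (hne : ∀ (n : ℤ × ℤ) (i : Fin 3),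
      u n - u (n + gTL i) ≠ 0 ∧ u n - u (n - gTL i) ≠ 0) :
    TriangularEqsR ![α 1 - α 2, α 2 - α 0, α 0 - α 1] u := by
  have hΓ : ![α 1 - α 2, α 2 - α 0, α 0 - α 1]
      = fun i => (R - α (i + 2)) - (R - α (i + 1)) := by
    funext i; fin_cases i <;> simp
  rw [hΓ]
  refine triangularEqsR_of_eq_one_div_latticeChar (a := fun j => L - α j) (c := L - R)
    (C := exp (dm - dp) / 2) (D := exp (-(dm + dp)) / 2) hL hR (fun j => by ring)
    (by positivity) (by positivity) (fun n => ?_) hne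
  have hQP : (dm - n.1 * q1 - n.2 * q2) - (dp - n.1 * p1 - n.2 * p2) = (dm - dp)
      + (n.1 * (log (R - α 1) - log (R - α 2)) + n.2 * (log (R - α 2) - log (R - α 0))) := by
    rw [hp1, hq1, hp2, hq2]; ring
  have hQP' : -((dm - n.1 * q1 - n.2 * q2) + (dp - n.1 * p1 - n.2 * p2)) = -(dm + dp)
      + (n.1 * (log (L - α 1) - log (L - α 2)) + n.2 * (log (L - α 2) - log (L - α 0))) := by
    rw [hp1, hq1, hp2, hq2]; ring
  rw [hu, exp_div_cosh, hQP, hQP', exp_add (dm - dp), exp_add (-(dm + dp)), latticeChar,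
    latticeChar]
  ring

theorem stmt19 (α : Fin 3 → ℝ) (hα : Function.Injective α)
    (L R : ℝ) (hL : ∀ i : Fin 3, 0 < L - α i) (hR : ∀ i : Fin 3, 0 < R - α i)
    (dp dm : ℝ) (p1 p2 q1 q2 : ℝ)
    (hp1 : p1 = (Real.log (L - α 1) + Real.log (R - α 1)
      - Real.log (L - α 2) - Real.log (R - α 2)) / 2)
    (hq1 : q1 = (Real.log (L - α 1) - Real.log (R - α 1)
      - Real.log (L - α 2) + Real.log (R - α 2)) / 2)
    (hp2 : p2 = (Real.log (L - α 2) + Real.log (R - α 2)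
      - Real.log (L - α 0) - Real.log (R - α 0)) / 2)
    (hq2 : q2 = (Real.log (L - α 2) - Real.log (R - α 2)
      - Real.log (L - α 0) + Real.log (R - α 0)) / 2)
    (u : ℤ × ℤ → ℝ)
    (hu : ∀ n : ℤ × ℤ,
      u n = Real.exp (dp - (n.1 : ℝ) * p1 - (n.2 : ℝ) * p2)
        / Real.cosh (dm - (n.1 : ℝ) * q1 - (n.2 : ℝ) * q2))
    (hne : ∀ (n : ℤ × ℤ) (i : Fin 3),
      u n - u (n + gTL i) ≠ 0 ∧ u n - u (n - gTL i) ≠ 0) :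
    TriangularEqsR ![α 1 - α 2, α 2 - α 0, α 0 - α 1] u :=
  stmt19_general α L R hL hR dp dm p1 p2 q1 q2 hp1 hq1 hp2 hq2 u hu hne
end
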